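/- arXiv:2104.05835 — 6 statements merged into one kernel-verified Lean document; each statement's English description precedes it below -/
import Mathlib

section
/- Let U : ℝ₊ × ℝ^m → ℝ be C¹ and let the mollified function U^n be defined by U^n(t,x) := n^m ∫_{Λ_n(x)} U(t,z) dz. Then U^n has continuous second order spatial derivatives given by U^n_{x_i x_j}(t,x) = n^m ∫_{Λ_n^{-i}(x)} [ U_{x_j}(t, x_i + 1/n, z_{-i}) − U_{x_j}(t, x_i, z_{-i}) ] dz_{-i}, where Λ_n^{-i}(x) is the cube Λ_n(x) with the i-th factor removed and z_{-i} the vector z with the i-th coordinate removed (inserted at position i as x_i or x_i + 1/n). -/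
open MeasureTheory Set Filter Topology



namespace Stmt2Aux

variable {P : Type*} [NormedAddCommGroup P] [NormedSpace ℝ P] [ProperSpace P]

omit [NormedSpace ℝ P] in
/-- Continuity of a parametric integral over a fixed compact set. -/
theorem contParam {α : Type*} [TopologicalSpace α] [T2Space α] [MeasurableSpace α]
    [OpensMeasurableSpace α] [SecondCountableTopology α]
    {μ : Measure α} {s : Set α} (hs : IsCompact s) (hμ : μ s ≠ ⊤)
    {F : P → α → ℝ} (hF : Continuous fun q : P × α => F q.1 q.2) :
    Continuous fun p => ∫ a in s, F p a ∂μ := by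
  rw [continuous_iff_continuousAt]
  intro p₀
  obtain ⟨C, hC⟩ := ((isCompact_closedBall p₀ 1).prod hs).exists_bound_of_continuousOn
    hF.continuousOn
  apply MeasureTheory.continuousAt_of_dominated (bound := fun _ => C)
  · exact Eventually.of_forall fun p =>
      (hF.comp (continuous_const.prodMk continuous_id)).aestronglyMeasurable
  · filter_upwards [Metric.closedBall_mem_nhds p₀ one_pos] with p hp
    refine (MeasureTheory.ae_restrict_iff' hs.isClosed.measurableSet).2
      (Eventually.of_forall fun a ha => ?_)
    exact hC (p, a) ⟨hp, ha⟩
  · exact MeasureTheory.integrableOn_const hμ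
  · exact Eventually.of_forall fun a =>
      (hF.comp (continuous_id.prodMk continuous_const)).continuousAt

/-- Differentiation under the integral sign over a fixed compact set. -/
theorem hasFDerivAtParam {α : Type*} [TopologicalSpace α] [T2Space α] [MeasurableSpace α]
    [OpensMeasurableSpace α] [SecondCountableTopology α]
    {μ : Measure α} {s : Set α} (hs : IsCompact s) (hμ : μ s ≠ ⊤)
    {F : P → α → ℝ} {F' : P → α → P →L[ℝ] ℝ}
    (hF : Continuous fun q : P × α => F q.1 q.2)
    (hF' : Continuous fun q : P × α => F' q.1 q.2)
    (hd : ∀ (a : α) (p : P), HasFDerivAt (fun p => F p a) (F' p a) p) (p₀ : P) :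
    HasFDerivAt (fun p => ∫ a in s, F p a ∂μ) (∫ a in s, F' p₀ a ∂μ) p₀ := by
  haveI : SecondCountableTopologyEither α (P →L[ℝ] ℝ) :=
    secondCountableTopologyEither_of_left _ _
  haveI : IsFiniteMeasure (μ.restrict s) :=
    ⟨by rwa [Measure.restrict_apply_univ, lt_top_iff_ne_top]⟩
  obtain ⟨C, hC⟩ := ((isCompact_closedBall p₀ 1).prod hs).exists_bound_of_continuousOn
    hF'.continuousOn
  obtain ⟨C₂, hC₂⟩ := hs.exists_bound_of_continuousOn
    ((hF.comp (continuous_const.prodMk continuous_id :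
      Continuous fun a : α => (p₀, a)))).continuousOn
  have hmeas : ∀ p : P, AEStronglyMeasurable (F p) (μ.restrict s) := fun p =>
    (hF.comp (continuous_const.prodMk continuous_id)).aestronglyMeasurable
  apply hasFDerivAt_integral_of_dominated_of_fderiv_le (Metric.ball_mem_nhds _ one_pos)
    (bound := fun _ => C) (Eventually.of_forall hmeas)
  · refine ⟨hmeas p₀, ?_⟩
    apply MeasureTheory.HasFiniteIntegral.of_bounded (C := C₂)
    exact (MeasureTheory.ae_restrict_iff' hs.isClosed.measurableSet).2
      (Eventually.of_forall fun a ha => hC₂ a ha)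
  · exact (hF'.comp (continuous_const.prodMk continuous_id)).aestronglyMeasurable
  · refine (MeasureTheory.ae_restrict_iff' hs.isClosed.measurableSet).2
      (Eventually.of_forall fun a ha p hp => ?_)
    exact hC (p, a) ⟨Metric.ball_subset_closedBall hp, ha⟩
  · exact MeasureTheory.integrable_const C
  · exact Eventually.of_forall fun a p _ => hd a p

/-- Differentiation (1-dim parameter) under the integral sign. -/
theorem hasDerivAtParam {α : Type*} [TopologicalSpace α] [T2Space α] [MeasurableSpace α]
    [OpensMeasurableSpace α] [SecondCountableTopology α]
    {μ : Measure α} {s : Set α} (hs : IsCompact s) (hμ : μ s ≠ ⊤)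
    {F : ℝ → α → ℝ} {F' : ℝ → α → ℝ}
    (hFmeas : ∀ x : ℝ, AEStronglyMeasurable (F x) (μ.restrict s))
    (hFint : Integrable (F 0) (μ.restrict s))
    (hF' : Continuous fun q : ℝ × α => F' q.1 q.2)
    (hd : ∀ (a : α) (x : ℝ), HasDerivAt (F · a) (F' x a) x) :
    HasDerivAt (fun x => ∫ a in s, F x a ∂μ) (∫ a in s, F' 0 a ∂μ) 0 := by
  obtain ⟨C, hC⟩ := ((isCompact_closedBall (0:ℝ) 1).prod hs).exists_bound_of_continuousOn
    hF'.continuousOn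
  refine (hasDerivAt_integral_of_dominated_loc_of_deriv_le (Metric.ball_mem_nhds _ one_pos)
    (Eventually.of_forall hFmeas) hFint
    ((hF'.comp (continuous_const.prodMk continuous_id)).aestronglyMeasurable)
    (bound := fun _ => C) ?_ (MeasureTheory.integrableOn_const hμ)
    (Eventually.of_forall fun a x _ => hd a x)).2
  refine (MeasureTheory.ae_restrict_iff' hs.isClosed.measurableSet).2
    (Eventually.of_forall fun a ha x hx => ?_)
  exact hC (x, a) ⟨Metric.ball_subset_closedBall hx, ha⟩

end Stmt2Aux


namespace Stmt2Aux2

theorem continuous_insertNth {k : ℕ} (i : Fin (k + 1)) :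
    Continuous fun p : ℝ × (Fin k → ℝ) => (i.insertNth p.1 p.2 : Fin (k+1) → ℝ) := by
  exact Continuous.finInsertNth (A := fun _ => ℝ) i continuous_fst continuous_snd

theorem integral_cube_translate {k : ℕ} (x : Fin k → ℝ) (c : ℝ) (f : (Fin k → ℝ) → ℝ) :
    ∫ z in univ.pi fun l => Icc (x l) (x l + c), f z
      = ∫ y in univ.pi fun _ : Fin k => Icc 0 c, f (x + y) := by
  have hemb : MeasurableEmbedding (fun y : Fin k → ℝ => x + y) :=
    (Homeomorph.addLeft x).measurableEmbedding
  have h := (measurePreserving_add_left (volume : Measure (Fin k → ℝ)) x).setIntegral_preimage_emb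
    hemb f (univ.pi fun l => Icc (x l) (x l + c))
  have hset : (fun y : Fin k → ℝ => x + y) ⁻¹' (univ.pi fun l => Icc (x l) (x l + c))
      = univ.pi fun _ : Fin k => Icc 0 c := by
    ext y
    simp only [mem_preimage, Set.mem_univ_pi, Pi.add_apply, mem_Icc]
    constructor
    · intro h l; have := h l; constructor <;> linarith [this.1, this.2]
    · intro h l; have := h l; constructor <;> linarith [this.1, this.2]
  rw [← h, hset]

theorem integral_cube_split {k : ℕ} (i : Fin (k + 1)) {c : ℝ}
    {f : (Fin (k + 1) → ℝ) → ℝ} (hf : Continuous f) :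
    ∫ y in univ.pi fun _ : Fin (k + 1) => Icc (0:ℝ) c, f y
      = ∫ w in univ.pi fun _ : Fin k => Icc (0:ℝ) c,
          ∫ r in Icc (0:ℝ) c, f (i.insertNth r w) := by
  have mp : MeasurePreserving (MeasurableEquiv.piFinSuccAbove (fun _ : Fin (k + 1) => ℝ) i).symm
      (volume : Measure (ℝ × (Fin k → ℝ))) volume :=
    (volume_preserving_piFinSuccAbove (fun _ : Fin (k + 1) => ℝ) i).symm
  have hsymm : ∀ p : ℝ × (Fin k → ℝ),
      (MeasurableEquiv.piFinSuccAbove (fun _ : Fin (k + 1) => ℝ) i).symm p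
        = i.insertNth p.1 p.2 := fun p => by
    rfl
  have hset : (MeasurableEquiv.piFinSuccAbove (fun _ : Fin (k + 1) => ℝ) i).symm ⁻¹'
        (univ.pi fun _ : Fin (k + 1) => Icc (0:ℝ) c)
      = (Icc (0:ℝ) c) ×ˢ (univ.pi fun _ : Fin k => Icc (0:ℝ) c) := by
    ext p
    simp only [mem_preimage, Set.mem_univ_pi, mem_prod, hsymm]
    rw [Fin.forall_iff_succAbove i]
    simp [Fin.insertNth_apply_same, Fin.insertNth_apply_succAbove]
  have h := mp.setIntegral_preimage_emb
    (MeasurableEquiv.piFinSuccAbove (fun _ : Fin (k + 1) => ℝ) i).symm.measurableEmbedding f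
    (univ.pi fun _ : Fin (k + 1) => Icc (0:ℝ) c)
  rw [← h, hset]
  have hfun : (fun p : ℝ × (Fin k → ℝ) =>
      f ((MeasurableEquiv.piFinSuccAbove (fun _ : Fin (k + 1) => ℝ) i).symm p))
      = fun p : ℝ × (Fin k → ℝ) => f (i.insertNth p.1 p.2) := by
    funext p; rw [hsymm]
  rw [hfun]
  have hint : Integrable (fun p : ℝ × (Fin k → ℝ) => f (i.insertNth p.1 p.2))
      ((((volume : Measure ℝ).restrict (Icc (0:ℝ) c)).prod
        ((volume : Measure (Fin k → ℝ)).restrict (univ.pi fun _ : Fin k => Icc (0:ℝ) c)))) := by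
    rw [Measure.prod_restrict]
    have : IntegrableOn (fun p : ℝ × (Fin k → ℝ) => f (i.insertNth p.1 p.2))
        ((Icc (0:ℝ) c) ×ˢ (univ.pi fun _ : Fin k => Icc (0:ℝ) c)) volume := by
      apply ContinuousOn.integrableOn_compact
        (isCompact_Icc.prod (isCompact_univ_pi fun _ => isCompact_Icc))
      exact (hf.comp (continuous_insertNth i)).continuousOn
    rw [Measure.volume_eq_prod _ _] at this
    exact this
  calc ∫ p in (Icc (0:ℝ) c) ×ˢ (univ.pi fun _ : Fin k => Icc (0:ℝ) c),
        f (i.insertNth p.1 p.2)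
      = ∫ p, f (i.insertNth p.1 p.2)
        ∂((((volume : Measure ℝ).restrict (Icc (0:ℝ) c)).prod
          ((volume : Measure (Fin k → ℝ)).restrict (univ.pi fun _ : Fin k => Icc (0:ℝ) c)))) := by
        rw [Measure.prod_restrict, ← Measure.volume_eq_prod _ _]
    _ = ∫ w in univ.pi fun _ : Fin k => Icc (0:ℝ) c, ∫ r in Icc (0:ℝ) c, f (i.insertNth r w) :=
        integral_prod_symm _ hint

end Stmt2Aux2


namespace Stmt2Aux3

theorem continuous_insertNth {k : ℕ} (i : Fin (k + 1)) :
    Continuous fun p : ℝ × (Fin k → ℝ) => (i.insertNth p.1 p.2 : Fin (k+1) → ℝ) := by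
  exact Continuous.finInsertNth (A := fun _ => ℝ) i continuous_fst continuous_snd

theorem insertNth_line {k : ℕ} (i : Fin (k + 1)) (w : Fin k → ℝ) (r : ℝ) :
    (i.insertNth r w : Fin (k+1) → ℝ)
      = (i.insertNth 0 w : Fin (k+1) → ℝ) + r • (Pi.single i 1 : Fin (k+1) → ℝ) := by
  funext l
  refine Fin.succAboveCases i ?_ ?_ l
  · simp
  · intro l'
    simp [Pi.single_eq_of_ne (Fin.succAbove_ne i l')]

theorem hasDerivAt_curve {k : ℕ} (i : Fin (k + 1)) (t : ℝ) (x : Fin (k+1) → ℝ)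
    (w : Fin k → ℝ) (r : ℝ) :
    HasDerivAt (fun r : ℝ => ((t, x + (i.insertNth r w : Fin (k+1) → ℝ)) : ℝ × (Fin (k+1) → ℝ)))
      (((0:ℝ), (Pi.single i 1 : Fin (k+1) → ℝ))) r := by
  have heq : (fun r : ℝ => ((t, x + (i.insertNth r w : Fin (k+1) → ℝ)) : ℝ × (Fin (k+1) → ℝ)))
      = fun r : ℝ => ((t, x + (i.insertNth 0 w : Fin (k+1) → ℝ)) : ℝ × (Fin (k+1) → ℝ))
          + r • (((0:ℝ), (Pi.single i 1 : Fin (k+1) → ℝ)) : ℝ × (Fin (k+1) → ℝ)) := by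
    funext r
    refine Prod.ext ?_ ?_
    · simp
    · simp [insertNth_line i w r, add_assoc]
  rw [heq]
  simpa using ((hasDerivAt_id r).smul_const
    ((((0:ℝ), (Pi.single i 1 : Fin (k+1) → ℝ))) : ℝ × (Fin (k+1) → ℝ))).const_add
    (((t, x + (i.insertNth 0 w : Fin (k+1) → ℝ)) : ℝ × (Fin (k+1) → ℝ)))

theorem hasDerivAt_lineCurve {k : ℕ} (i : Fin (k + 1)) (t : ℝ) (x : Fin (k+1) → ℝ) (s : ℝ) :
    HasDerivAt (fun s : ℝ =>
        ((t, x + s • (Pi.single i 1 : Fin (k+1) → ℝ)) : ℝ × (Fin (k+1) → ℝ)))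
      (((0:ℝ), (Pi.single i 1 : Fin (k+1) → ℝ))) s := by
  have heq : (fun s : ℝ =>
        ((t, x + s • (Pi.single i 1 : Fin (k+1) → ℝ)) : ℝ × (Fin (k+1) → ℝ)))
      = fun s : ℝ => ((t, x) : ℝ × (Fin (k+1) → ℝ))
          + s • (((0:ℝ), (Pi.single i 1 : Fin (k+1) → ℝ)) : ℝ × (Fin (k+1) → ℝ)) := by
    funext s
    refine Prod.ext ?_ ?_ <;> simp
  rw [heq]
  simpa using ((hasDerivAt_id s).smul_const
    ((((0:ℝ), (Pi.single i 1 : Fin (k+1) → ℝ))) : ℝ × (Fin (k+1) → ℝ))).const_add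
    (((t, x) : ℝ × (Fin (k+1) → ℝ)))

theorem hasFDerivAt_transl {k : ℕ} {U : ℝ × (Fin k → ℝ) → ℝ} (hU : Differentiable ℝ U)
    (v : Fin k → ℝ) (p : ℝ × (Fin k → ℝ)) :
    HasFDerivAt (fun q : ℝ × (Fin k → ℝ) => U (q.1, q.2 + v))
      (fderiv ℝ U (p.1, p.2 + v)) p := by
  have key : ∀ q : ℝ × (Fin k → ℝ), ((q.1, q.2 + v) : ℝ × (Fin k → ℝ)) = q + ((0:ℝ), v) := by
    intro q; refine Prod.ext ?_ ?_ <;> simp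
  have h1 : HasFDerivAt (fun q : ℝ × (Fin k → ℝ) => q + (((0:ℝ), v) : ℝ × (Fin k → ℝ)))
      (ContinuousLinearMap.id ℝ (ℝ × (Fin k → ℝ))) p := (hasFDerivAt_id p).add_const _
  have h2 := (hU (p + ((0:ℝ), v))).hasFDerivAt.comp p h1
  rw [ContinuousLinearMap.comp_id] at h2
  simp only [← key] at h2
  exact h2

theorem update_add_eq {k : ℕ} (i : Fin k) (x y : Fin k → ℝ) (c : ℝ) :
    Function.update (x + y) i (x i + c) = x + Function.update y i c := by
  funext l
  rcases eq_or_ne l i with rfl | h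
  · simp
  · simp [Function.update_of_ne h]

theorem update_insertNth {k : ℕ} (i : Fin (k + 1)) (w : Fin k → ℝ) (r c : ℝ) :
    Function.update (i.insertNth r w : Fin (k+1) → ℝ) i c = (i.insertNth c w : Fin (k+1) → ℝ) := by
  funext l
  refine Fin.succAboveCases i ?_ ?_ l
  · simp
  · intro l'
    simp [Function.update_of_ne (Fin.succAbove_ne i l')]

theorem line_shift {k : ℕ} (i : Fin (k + 1)) (x : Fin (k+1) → ℝ) (w : Fin k → ℝ) (s r : ℝ) :
    x + s • (Pi.single i 1 : Fin (k+1) → ℝ) + (i.insertNth r w : Fin (k+1) → ℝ)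
      = x + (i.insertNth (s + r) w : Fin (k+1) → ℝ) := by
  funext l
  refine Fin.succAboveCases i ?_ ?_ l
  · simp [add_assoc]
  · intro l'
    simp [Pi.single_eq_of_ne (Fin.succAbove_ne i l')]

theorem ftc_inner {k : ℕ} {U : ℝ × (Fin (k+1) → ℝ) → ℝ} (hU : ContDiff ℝ 1 U)
    {c : ℝ} (hc : 0 ≤ c) (q : ℝ × (Fin (k+1) → ℝ)) (i : Fin (k+1)) (w : Fin k → ℝ) :
    ∫ r in Icc (0:ℝ) c,
        fderiv ℝ U (q.1, q.2 + (i.insertNth r w : Fin (k+1) → ℝ))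
          ((0:ℝ), (Pi.single i 1 : Fin (k+1) → ℝ))
      = U (q.1, q.2 + (i.insertNth c w : Fin (k+1) → ℝ))
        - U (q.1, q.2 + (i.insertNth 0 w : Fin (k+1) → ℝ)) := by
  have hUd : Differentiable ℝ U := hU.differentiable one_ne_zero
  have hfd : Continuous (fun z => fderiv ℝ U z) := hU.continuous_fderiv one_ne_zero
  have hcurve : Continuous fun r : ℝ =>
      ((q.1, q.2 + (i.insertNth r w : Fin (k+1) → ℝ)) : ℝ × (Fin (k+1) → ℝ)) :=
    continuous_const.prodMk (continuous_const.add
      ((continuous_insertNth i).comp (continuous_id.prodMk continuous_const)))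
  rw [MeasureTheory.integral_Icc_eq_integral_Ioc, ← intervalIntegral.integral_of_le hc]
  apply intervalIntegral.integral_eq_sub_of_hasDerivAt
  · intro r _
    exact (hUd _).hasFDerivAt.comp_hasDerivAt r (hasDerivAt_curve i q.1 q.2 w r)
  · apply Continuous.intervalIntegrable
    exact (isBoundedBilinearMap_apply.continuous.comp
      ((hfd.comp hcurve).prodMk continuous_const))

theorem hasDerivAt_slide {G : ℝ → ℝ} (hG : Continuous G) (c s : ℝ) :
    HasDerivAt (fun s : ℝ => ∫ u in s..(s + c), G u) (G (s + c) - G s) s := by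
  have I1 : ∀ a b : ℝ, IntervalIntegrable G volume a b := fun a b => hG.intervalIntegrable a b
  have e1 : (fun s : ℝ => ∫ u in s..(s + c), G u)
      = fun s : ℝ => (∫ u in (0:ℝ)..(s + c), G u) - ∫ u in (0:ℝ)..s, G u := by
    funext s
    have := intervalIntegral.integral_add_adjacent_intervals (I1 0 s) (I1 s (s + c))
    linarith
  rw [e1]
  have hmeas : ∀ b : ℝ, StronglyMeasurableAtFilter G (𝓝 b) volume :=
    fun b => hG.stronglyMeasurable.stronglyMeasurableAtFilter
  have h2 : HasDerivAt (fun s : ℝ => ∫ u in (0:ℝ)..s, G u) (G s) s :=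
    intervalIntegral.integral_hasDerivAt_right (I1 0 s) (hmeas s) hG.continuousAt
  have h3 : HasDerivAt (fun s : ℝ => ∫ u in (0:ℝ)..(s + c), G u) (G (s + c)) s := by
    have h4 : HasDerivAt (fun u : ℝ => ∫ v in (0:ℝ)..u, G v) (G (s + c)) (s + c) :=
      intervalIntegral.integral_hasDerivAt_right (I1 0 (s + c)) (hmeas (s + c)) hG.continuousAt
    have h5 := HasDerivAt.comp s h4 ((hasDerivAt_id s).add_const c)
    simpa [Function.comp_def] using h5
  exact h3.sub h2

end Stmt2Aux3

/-- The mollification `Uⁿ` of a C¹ function `U` has continuous second order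
spatial derivatives, given by
`Uⁿ_{xᵢxⱼ}(t,x) = nᵐ ∫_{Λₙ⁻ⁱ(x)} [U_{xⱼ}(t, xᵢ+1/n, z₋ᵢ) − U_{xⱼ}(t, xᵢ, z₋ᵢ)] dz₋ᵢ`.
The (m−1)-dimensional integral over `Λₙ⁻ⁱ(x)` is encoded as `n · (nᵐ ∫_{Λₙ(x)} … dz)`,
with the `i`-th coordinate of `z` overwritten by `xᵢ + 1/n` resp. `xᵢ` (the integrand is
independent of `zᵢ`, and the `i`-th side of the cube has length `1/n`). -/
theorem stmt_2 {m : ℕ} (U : ℝ × (Fin m → ℝ) → ℝ) (hU : ContDiff ℝ 1 U)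
    (n : ℕ) (hn : 1 ≤ n)
    (Un : (ℝ × (Fin m → ℝ)) → ℝ)
    (hUn : ∀ p : ℝ × (Fin m → ℝ),
      Un p = (n : ℝ) ^ m *
        ∫ z in Set.univ.pi fun k => Icc (p.2 k) (p.2 k + 1 / (n : ℝ)), U (p.1, z)) :
    ∀ i j : Fin m,
      Continuous (fun p : ℝ × (Fin m → ℝ) =>
        fderiv ℝ (fun q : ℝ × (Fin m → ℝ) => fderiv ℝ Un q ((0 : ℝ), Pi.single j 1)) p
          ((0 : ℝ), Pi.single i 1)) ∧
      ∀ (t : ℝ) (x : Fin m → ℝ),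
        fderiv ℝ (fun q : ℝ × (Fin m → ℝ) => fderiv ℝ Un q ((0 : ℝ), Pi.single j 1)) (t, x)
            ((0 : ℝ), Pi.single i 1)
          = (n : ℝ) ^ (m + 1) *
              ∫ z in Set.univ.pi fun k => Icc (x k) (x k + 1 / (n : ℝ)),
                (fderiv ℝ U (t, Function.update z i (x i + 1 / (n : ℝ)))
                    ((0 : ℝ), Pi.single j 1)
                  - fderiv ℝ U (t, Function.update z i (x i)) ((0 : ℝ), Pi.single j 1)) := by
  intro i j
  obtain ⟨k, rfl⟩ : ∃ k, m = k + 1 := ⟨m - 1, (Nat.succ_pred_eq_of_pos i.pos).symm⟩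
  have hnR : (0:ℝ) < (n:ℝ) := by exact_mod_cast hn
  set c : ℝ := 1 / (n:ℝ) with hcdef
  have hc : 0 ≤ c := by positivity
  have hUc : Continuous U := hU.continuous
  have hUd : Differentiable ℝ U := hU.differentiable one_ne_zero
  have hfd : Continuous (fun z => fderiv ℝ U z) := hU.continuous_fderiv one_ne_zero
  have hQ0c : IsCompact (univ.pi fun _ : Fin (k+1) => Icc (0:ℝ) c) :=
    isCompact_univ_pi fun _ => isCompact_Icc
  have hBc : IsCompact (univ.pi fun _ : Fin k => Icc (0:ℝ) c) :=
    isCompact_univ_pi fun _ => isCompact_Icc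
  have hQ0fin : volume (univ.pi fun _ : Fin (k+1) => Icc (0:ℝ) c) ≠ ⊤ :=
    hQ0c.measure_lt_top.ne
  have hBfin : volume (univ.pi fun _ : Fin k => Icc (0:ℝ) c) ≠ ⊤ := hBc.measure_lt_top.ne
  have hBmeas : MeasurableSet (univ.pi fun _ : Fin k => Icc (0:ℝ) c) :=
    hBc.isClosed.measurableSet
  have hQ0meas : MeasurableSet (univ.pi fun _ : Fin (k+1) => Icc (0:ℝ) c) :=
    hQ0c.isClosed.measurableSet
  have htr : Continuous fun qy : (ℝ × (Fin (k+1) → ℝ)) × (Fin (k+1) → ℝ) =>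
      ((qy.1.1, qy.1.2 + qy.2) : ℝ × (Fin (k+1) → ℝ)) :=
    (continuous_fst.fst).prodMk ((continuous_fst.snd).add continuous_snd)
  have hUtr : Continuous fun qy : (ℝ × (Fin (k+1) → ℝ)) × (Fin (k+1) → ℝ) =>
      U (qy.1.1, qy.1.2 + qy.2) := hUc.comp htr
  have hfdtr : Continuous fun qy : (ℝ × (Fin (k+1) → ℝ)) × (Fin (k+1) → ℝ) =>
      fderiv ℝ U (qy.1.1, qy.1.2 + qy.2) := hfd.comp htr
  have hUn' : Un = fun p : ℝ × (Fin (k+1) → ℝ) =>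
      (n:ℝ)^(k+1) * ∫ y in univ.pi fun _ : Fin (k+1) => Icc (0:ℝ) c, U (p.1, p.2 + y) := by
    funext p
    rw [hUn p]
    congr 1
    exact Stmt2Aux2.integral_cube_translate p.2 c (fun z => U (p.1, z))
  have hUnD : ∀ (t' : ℝ) (x' : Fin (k+1) → ℝ), HasFDerivAt Un
      ((n:ℝ)^(k+1) • ∫ y in univ.pi fun _ : Fin (k+1) => Icc (0:ℝ) c,
        fderiv ℝ U (t', x' + y)) (t', x') := by
    intro t' x'
    rw [hUn']
    exact (Stmt2Aux.hasFDerivAtParam hQ0c hQ0fin hUtr hfdtr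
      (fun y q => Stmt2Aux3.hasFDerivAt_transl hUd y q) (t', x')).const_mul ((n:ℝ)^(k+1))
  have hint1 : ∀ (t' : ℝ) (x' : Fin (k+1) → ℝ),
      Integrable (fun y => fderiv ℝ U (t', x' + y))
        (volume.restrict (univ.pi fun _ : Fin (k+1) => Icc (0:ℝ) c)) := fun t' x' =>
    (ContinuousOn.integrableOn_compact hQ0c
      ((hfdtr.comp ((continuous_const :
          Continuous fun _ : Fin (k+1) → ℝ => ((t', x') : ℝ × (Fin (k+1) → ℝ))).prodMk
        continuous_id)).continuousOn))
  have hV1 : ∀ (t' : ℝ) (x' : Fin (k+1) → ℝ),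
      fderiv ℝ Un (t', x') ((0:ℝ), Pi.single j 1)
        = (n:ℝ)^(k+1) * ∫ y in univ.pi fun _ : Fin (k+1) => Icc (0:ℝ) c,
            fderiv ℝ U (t', x' + y) ((0:ℝ), Pi.single j 1) := by
    intro t' x'
    rw [(hUnD t' x').fderiv, ContinuousLinearMap.smul_apply,
      ContinuousLinearMap.integral_apply (hint1 t' x'), smul_eq_mul]
  have happly : ∀ v : ℝ × (Fin (k+1) → ℝ),
      Continuous fun qy : (ℝ × (Fin (k+1) → ℝ)) × (Fin (k+1) → ℝ) =>
        fderiv ℝ U (qy.1.1, qy.1.2 + qy.2) v := fun v =>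
    isBoundedBilinearMap_apply.continuous.comp (hfdtr.prodMk continuous_const)
  have hV2 : ∀ (t' : ℝ) (x' : Fin (k+1) → ℝ),
      fderiv ℝ Un (t', x') ((0:ℝ), Pi.single j 1)
        = (n:ℝ)^(k+1) * ∫ w in univ.pi fun _ : Fin k => Icc (0:ℝ) c,
            (U (t', x' + j.insertNth c w) - U (t', x' + j.insertNth 0 w)) := by
    intro t' x'
    rw [hV1 t' x']
    congr 1
    rw [Stmt2Aux2.integral_cube_split j
      (f := fun y => fderiv ℝ U (t', x' + y) ((0:ℝ), Pi.single j 1))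
      ((happly _).comp ((continuous_const :
          Continuous fun _ : Fin (k+1) → ℝ => ((t', x') : ℝ × (Fin (k+1) → ℝ))).prodMk
        continuous_id))]
    refine MeasureTheory.setIntegral_congr_fun hBmeas fun w _ => ?_
    exact Stmt2Aux3.ftc_inner hU hc (t', x') j w
  have hinsc : Continuous fun qw : (ℝ × (Fin (k+1) → ℝ)) × (Fin k → ℝ) =>
      ((qw.1.1, qw.1.2 + j.insertNth c qw.2) : ℝ × (Fin (k+1) → ℝ)) :=
    (continuous_fst.fst).prodMk ((continuous_fst.snd).add
      ((Stmt2Aux3.continuous_insertNth j).comp (continuous_const.prodMk continuous_snd)))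
  have hins0 : Continuous fun qw : (ℝ × (Fin (k+1) → ℝ)) × (Fin k → ℝ) =>
      ((qw.1.1, qw.1.2 + j.insertNth 0 qw.2) : ℝ × (Fin (k+1) → ℝ)) :=
    (continuous_fst.fst).prodMk ((continuous_fst.snd).add
      ((Stmt2Aux3.continuous_insertNth j).comp (continuous_const.prodMk continuous_snd)))
  have hHcont : Continuous fun qw : (ℝ × (Fin (k+1) → ℝ)) × (Fin k → ℝ) =>
      U (qw.1.1, qw.1.2 + j.insertNth c qw.2) - U (qw.1.1, qw.1.2 + j.insertNth 0 qw.2) :=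
    (hUc.comp hinsc).sub (hUc.comp hins0)
  have hH'cont : Continuous fun qw : (ℝ × (Fin (k+1) → ℝ)) × (Fin k → ℝ) =>
      fderiv ℝ U (qw.1.1, qw.1.2 + j.insertNth c qw.2)
        - fderiv ℝ U (qw.1.1, qw.1.2 + j.insertNth 0 qw.2) :=
    (hfd.comp hinsc).sub (hfd.comp hins0)
  have hVD : ∀ (t' : ℝ) (x' : Fin (k+1) → ℝ),
      HasFDerivAt (fun q : ℝ × (Fin (k+1) → ℝ) => fderiv ℝ Un q ((0:ℝ), Pi.single j 1))
        ((n:ℝ)^(k+1) • ∫ w in univ.pi fun _ : Fin k => Icc (0:ℝ) c,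
          (fderiv ℝ U (t', x' + j.insertNth c w) - fderiv ℝ U (t', x' + j.insertNth 0 w)))
        (t', x') := by
    intro t' x'
    have heq : (fun q : ℝ × (Fin (k+1) → ℝ) => fderiv ℝ Un q ((0:ℝ), Pi.single j 1))
        = fun q : ℝ × (Fin (k+1) → ℝ) => (n:ℝ)^(k+1) *
            ∫ w in univ.pi fun _ : Fin k => Icc (0:ℝ) c,
              (U (q.1, q.2 + j.insertNth c w) - U (q.1, q.2 + j.insertNth 0 w)) :=
      funext fun q => hV2 q.1 q.2
    rw [heq]
    exact (Stmt2Aux.hasFDerivAtParam hBc hBfin hHcont hH'cont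
      (fun w q => (Stmt2Aux3.hasFDerivAt_transl hUd _ q).sub
        (Stmt2Aux3.hasFDerivAt_transl hUd _ q)) (t', x')).const_mul ((n:ℝ)^(k+1))
  have hint2 : ∀ (t' : ℝ) (x' : Fin (k+1) → ℝ),
      Integrable (fun w => fderiv ℝ U (t', x' + j.insertNth c w)
          - fderiv ℝ U (t', x' + j.insertNth 0 w))
        (volume.restrict (univ.pi fun _ : Fin k => Icc (0:ℝ) c)) := fun t' x' =>
    (ContinuousOn.integrableOn_compact hBc
      ((hH'cont.comp ((continuous_const :
          Continuous fun _ : Fin k → ℝ => ((t', x') : ℝ × (Fin (k+1) → ℝ))).prodMk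
        continuous_id)).continuousOn))
  refine ⟨?_, ?_⟩
  · have heq2 : (fun p : ℝ × (Fin (k+1) → ℝ) =>
        fderiv ℝ (fun q : ℝ × (Fin (k+1) → ℝ) => fderiv ℝ Un q ((0:ℝ), Pi.single j 1)) p
          ((0:ℝ), Pi.single i 1))
        = fun p : ℝ × (Fin (k+1) → ℝ) => (n:ℝ)^(k+1) *
            ∫ w in univ.pi fun _ : Fin k => Icc (0:ℝ) c,
              (fderiv ℝ U (p.1, p.2 + j.insertNth c w) ((0:ℝ), Pi.single i 1)
                - fderiv ℝ U (p.1, p.2 + j.insertNth 0 w) ((0:ℝ), Pi.single i 1)) := by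
      funext p
      rw [(hVD p.1 p.2).fderiv, ContinuousLinearMap.smul_apply,
        ContinuousLinearMap.integral_apply (hint2 p.1 p.2), smul_eq_mul]
      rfl
    rw [heq2]
    refine continuous_const.mul (Stmt2Aux.contParam hBc hBfin ?_)
    exact (isBoundedBilinearMap_apply.continuous.comp
        ((hfd.comp hinsc).prodMk continuous_const)).sub
      (isBoundedBilinearMap_apply.continuous.comp
        ((hfd.comp hins0).prodMk continuous_const))
  · intro t x
    have hγ := Stmt2Aux3.hasDerivAt_lineCurve i t x 0
    have hγ0 : ((t, x + (0:ℝ) • (Pi.single i 1 : Fin (k+1) → ℝ)) : ℝ × (Fin (k+1) → ℝ))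
        = (t, x) := by
      refine Prod.ext rfl ?_
      simp
    have hVD0 : HasFDerivAt (fun q : ℝ × (Fin (k+1) → ℝ) =>
        fderiv ℝ Un q ((0:ℝ), Pi.single j 1))
        ((n:ℝ)^(k+1) • ∫ w in univ.pi fun _ : Fin k => Icc (0:ℝ) c,
          (fderiv ℝ U (t, x + j.insertNth c w) - fderiv ℝ U (t, x + j.insertNth 0 w)))
        ((t, x + (0:ℝ) • (Pi.single i 1 : Fin (k+1) → ℝ)) : ℝ × (Fin (k+1) → ℝ)) := by
      rw [hγ0]; exact hVD t x
    have hD1 : HasDerivAt (fun s : ℝ =>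
        fderiv ℝ Un (t, x + s • (Pi.single i 1 : Fin (k+1) → ℝ)) ((0:ℝ), Pi.single j 1))
        (((n:ℝ)^(k+1) • ∫ w in univ.pi fun _ : Fin k => Icc (0:ℝ) c,
          (fderiv ℝ U (t, x + j.insertNth c w) - fderiv ℝ U (t, x + j.insertNth 0 w)))
          ((0:ℝ), Pi.single i 1)) 0 := by
      have h := hVD0.comp_hasDerivAt 0 hγ
      simpa [Function.comp_def] using h
    have hGcont : Continuous fun uw : ℝ × (Fin k → ℝ) =>
        fderiv ℝ U (t, x + i.insertNth uw.1 uw.2) ((0:ℝ), Pi.single j 1) :=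
      isBoundedBilinearMap_apply.continuous.comp
        ((hfd.comp (continuous_const.prodMk
          (continuous_const.add (Stmt2Aux3.continuous_insertNth i)))).prodMk
        continuous_const)
    have hGw : ∀ w : Fin k → ℝ, Continuous fun u : ℝ =>
        fderiv ℝ U (t, x + i.insertNth u w) ((0:ℝ), Pi.single j 1) := fun w =>
      hGcont.comp (continuous_id.prodMk continuous_const)
    have hrep : ∀ s : ℝ,
        fderiv ℝ Un (t, x + s • (Pi.single i 1 : Fin (k+1) → ℝ)) ((0:ℝ), Pi.single j 1)
          = (n:ℝ)^(k+1) * ∫ w in univ.pi fun _ : Fin k => Icc (0:ℝ) c,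
              ∫ u in s..(s + c),
                fderiv ℝ U (t, x + i.insertNth u w) ((0:ℝ), Pi.single j 1) := by
      intro s
      rw [hV1 t (x + s • (Pi.single i 1 : Fin (k+1) → ℝ))]
      congr 1
      rw [Stmt2Aux2.integral_cube_split i
        (f := fun y => fderiv ℝ U (t, x + s • (Pi.single i 1 : Fin (k+1) → ℝ) + y)
          ((0:ℝ), Pi.single j 1))
        ((happly _).comp ((continuous_const : Continuous fun _ : Fin (k+1) → ℝ =>
            ((t, x + s • (Pi.single i 1 : Fin (k+1) → ℝ)) : ℝ × (Fin (k+1) → ℝ))).prodMk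
          continuous_id))]
      refine MeasureTheory.setIntegral_congr_fun hBmeas fun w _ => ?_
      have hptw : ∀ r : ℝ, x + s • (Pi.single i 1 : Fin (k+1) → ℝ) + i.insertNth r w
          = x + i.insertNth (s + r) w := fun r => Stmt2Aux3.line_shift i x w s r
      calc ∫ r in Icc (0:ℝ) c,
            fderiv ℝ U (t, x + s • (Pi.single i 1 : Fin (k+1) → ℝ) + i.insertNth r w)
              ((0:ℝ), Pi.single j 1)
          = ∫ r in Icc (0:ℝ) c, fderiv ℝ U (t, x + i.insertNth (s + r) w)
              ((0:ℝ), Pi.single j 1) := by simp only [hptw]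
        _ = ∫ u in s..(s + c), fderiv ℝ U (t, x + i.insertNth u w)
              ((0:ℝ), Pi.single j 1) := by
            rw [MeasureTheory.integral_Icc_eq_integral_Ioc,
              ← intervalIntegral.integral_of_le hc,
              intervalIntegral.integral_comp_add_left
                (fun u : ℝ => fderiv ℝ U (t, x + (i.insertNth u w : Fin (k+1) → ℝ))
                  ((0:ℝ), Pi.single j 1)) s]
            norm_num
    have hFmeas : ∀ s : ℝ, AEStronglyMeasurable
        (fun w : Fin k → ℝ => ∫ u in s..(s + c),
          fderiv ℝ U (t, x + i.insertNth u w) ((0:ℝ), Pi.single j 1))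
        (volume.restrict (univ.pi fun _ : Fin k => Icc (0:ℝ) c)) := by
      intro s
      have hsc : s ≤ s + c := by linarith
      have hcw : Continuous fun w : Fin k → ℝ => ∫ u in Icc s (s + c),
          fderiv ℝ U (t, x + i.insertNth u w) ((0:ℝ), Pi.single j 1) :=
        Stmt2Aux.contParam isCompact_Icc (isCompact_Icc.measure_lt_top).ne
          (hGcont.comp (continuous_snd.prodMk continuous_fst))
      have heqw : (fun w : Fin k → ℝ => ∫ u in s..(s + c),
          fderiv ℝ U (t, x + i.insertNth u w) ((0:ℝ), Pi.single j 1))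
          = fun w : Fin k → ℝ => ∫ u in Icc s (s + c),
              fderiv ℝ U (t, x + i.insertNth u w) ((0:ℝ), Pi.single j 1) := by
        funext w
        rw [intervalIntegral.integral_of_le hsc, ← MeasureTheory.integral_Icc_eq_integral_Ioc]
      rw [heqw]
      exact hcw.aestronglyMeasurable
    have hFint : Integrable (fun w : Fin k → ℝ => ∫ u in (0:ℝ)..(0 + c),
        fderiv ℝ U (t, x + i.insertNth u w) ((0:ℝ), Pi.single j 1))
        (volume.restrict (univ.pi fun _ : Fin k => Icc (0:ℝ) c)) := by
      have hcw : Continuous fun w : Fin k → ℝ => ∫ u in (0:ℝ)..(0 + c),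
          fderiv ℝ U (t, x + i.insertNth u w) ((0:ℝ), Pi.single j 1) := by
        have heqw : (fun w : Fin k → ℝ => ∫ u in (0:ℝ)..(0 + c),
            fderiv ℝ U (t, x + i.insertNth u w) ((0:ℝ), Pi.single j 1))
            = fun w : Fin k → ℝ => ∫ u in Icc (0:ℝ) (0 + c),
                fderiv ℝ U (t, x + i.insertNth u w) ((0:ℝ), Pi.single j 1) := by
          funext w
          rw [intervalIntegral.integral_of_le (by linarith),
            ← MeasureTheory.integral_Icc_eq_integral_Ioc]
        rw [heqw]
        exact Stmt2Aux.contParam isCompact_Icc (isCompact_Icc.measure_lt_top).ne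
          (hGcont.comp (continuous_snd.prodMk continuous_fst))
      exact (ContinuousOn.integrableOn_compact hBc hcw.continuousOn)
    have hF'cont : Continuous fun q : ℝ × (Fin k → ℝ) =>
        fderiv ℝ U (t, x + i.insertNth (q.1 + c) q.2) ((0:ℝ), Pi.single j 1)
          - fderiv ℝ U (t, x + i.insertNth q.1 q.2) ((0:ℝ), Pi.single j 1) :=
      (hGcont.comp ((continuous_fst.add continuous_const).prodMk continuous_snd)).sub
        (hGcont.comp (continuous_fst.prodMk continuous_snd))
    have hdF : ∀ (w : Fin k → ℝ) (s : ℝ), HasDerivAt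
        (fun s : ℝ => ∫ u in s..(s + c),
          fderiv ℝ U (t, x + i.insertNth u w) ((0:ℝ), Pi.single j 1))
        (fderiv ℝ U (t, x + i.insertNth (s + c) w) ((0:ℝ), Pi.single j 1)
          - fderiv ℝ U (t, x + i.insertNth s w) ((0:ℝ), Pi.single j 1)) s := fun w s =>
      Stmt2Aux3.hasDerivAt_slide (hGw w) c s
    have hd := Stmt2Aux.hasDerivAtParam hBc hBfin hFmeas hFint hF'cont hdF
    have hD2 : HasDerivAt (fun s : ℝ =>
        fderiv ℝ Un (t, x + s • (Pi.single i 1 : Fin (k+1) → ℝ)) ((0:ℝ), Pi.single j 1))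
        ((n:ℝ)^(k+1) * ∫ w in univ.pi fun _ : Fin k => Icc (0:ℝ) c,
          (fderiv ℝ U (t, x + i.insertNth (0 + c) w) ((0:ℝ), Pi.single j 1)
            - fderiv ℝ U (t, x + i.insertNth 0 w) ((0:ℝ), Pi.single j 1))) 0 := by
      have heq3 : (fun s : ℝ =>
          fderiv ℝ Un (t, x + s • (Pi.single i 1 : Fin (k+1) → ℝ)) ((0:ℝ), Pi.single j 1))
          = fun s : ℝ => (n:ℝ)^(k+1) * ∫ w in univ.pi fun _ : Fin k => Icc (0:ℝ) c,
              ∫ u in s..(s + c),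
                fderiv ℝ U (t, x + i.insertNth u w) ((0:ℝ), Pi.single j 1) :=
        funext hrep
      rw [heq3]
      exact hd.const_mul ((n:ℝ)^(k+1))
    have huniq := hD1.unique hD2
    rw [(hVD t x).fderiv, huniq]
    rw [Stmt2Aux2.integral_cube_translate x c (fun z =>
      fderiv ℝ U (t, Function.update z i (x i + c)) ((0:ℝ), Pi.single j 1)
        - fderiv ℝ U (t, Function.update z i (x i)) ((0:ℝ), Pi.single j 1))]
    have e12 : ∀ y : Fin (k+1) → ℝ,
        (fderiv ℝ U (t, Function.update (x + y) i (x i + c)) ((0:ℝ), Pi.single j 1)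
          - fderiv ℝ U (t, Function.update (x + y) i (x i)) ((0:ℝ), Pi.single j 1))
        = (fderiv ℝ U (t, x + Function.update y i c) ((0:ℝ), Pi.single j 1)
          - fderiv ℝ U (t, x + Function.update y i 0) ((0:ℝ), Pi.single j 1)) := by
      intro y
      have e1 := Stmt2Aux3.update_add_eq i x y c
      have e2 : Function.update (x + y) i (x i) = x + Function.update y i 0 := by
        have := Stmt2Aux3.update_add_eq i x y 0; rwa [add_zero] at this
      rw [e1, e2]
    rw [MeasureTheory.setIntegral_congr_fun hQ0meas fun y _ => e12 y]
    rw [Stmt2Aux2.integral_cube_split i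
      (f := fun y => fderiv ℝ U (t, x + Function.update y i c) ((0:ℝ), Pi.single j 1)
        - fderiv ℝ U (t, x + Function.update y i 0) ((0:ℝ), Pi.single j 1))
      (((happly _).comp ((continuous_const : Continuous fun _ : Fin (k+1) → ℝ =>
            ((t, x) : ℝ × (Fin (k+1) → ℝ))).prodMk
          (continuous_id.update i continuous_const))).sub
        ((happly _).comp ((continuous_const : Continuous fun _ : Fin (k+1) → ℝ =>
            ((t, x) : ℝ × (Fin (k+1) → ℝ))).prodMk
          (continuous_id.update i continuous_const))))]
    have e3 : ∀ w : Fin k → ℝ,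
        (∫ r in Icc (0:ℝ) c,
          (fderiv ℝ U (t, x + Function.update (i.insertNth r w) i c) ((0:ℝ), Pi.single j 1)
            - fderiv ℝ U (t, x + Function.update (i.insertNth r w) i 0)
                ((0:ℝ), Pi.single j 1)))
        = c • (fderiv ℝ U (t, x + i.insertNth c w) ((0:ℝ), Pi.single j 1)
            - fderiv ℝ U (t, x + i.insertNth 0 w) ((0:ℝ), Pi.single j 1)) := by
      intro w
      have e4 : ∀ r : ℝ,
          (fderiv ℝ U (t, x + Function.update (i.insertNth r w) i c) ((0:ℝ), Pi.single j 1)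
            - fderiv ℝ U (t, x + Function.update (i.insertNth r w) i 0)
                ((0:ℝ), Pi.single j 1))
          = (fderiv ℝ U (t, x + i.insertNth c w) ((0:ℝ), Pi.single j 1)
            - fderiv ℝ U (t, x + i.insertNth 0 w) ((0:ℝ), Pi.single j 1)) := by
        intro r
        rw [Stmt2Aux3.update_insertNth, Stmt2Aux3.update_insertNth]
      rw [MeasureTheory.setIntegral_congr_fun measurableSet_Icc fun r _ => e4 r]
      rw [MeasureTheory.setIntegral_const, measureReal_def, Real.volume_Icc, sub_zero,
        ENNReal.toReal_ofReal hc]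
    rw [MeasureTheory.setIntegral_congr_fun hBmeas fun w _ => e3 w]
    rw [MeasureTheory.integral_smul, smul_eq_mul]
    rw [show (0:ℝ) + c = c by ring]
    have hne : (n:ℝ) ≠ 0 := ne_of_gt hnR
    rw [hcdef]
    field_simp
    ring
end

section
/- Let b₁ : ℝ₊ × ℝ^{m-1} → ℝ be non-decreasing in each argument, with C := {(t,x) : x₁ > b₁(t, x_{-1})} and D its complement. For i ≥ 2 and the generalised inverse b_i, define b_i^ε(t, x_{-i}) := b_i(t+ε, x₁−ε, x₂+ε,…, x_{i-1}+ε, x_{i+1}+ε,…, x_m+ε) − ε. Then ε ↦ b_i^ε(t, x_{-i}) is non-increasing as ε↓0, b_i^{0+}(t, x_{-i}) := lim_{ε↓0} b_i^ε(t, x_{-i}) exists, b_i^{0+} ≤ b_i, and if D is closed then b_i^{0+}(t, x_{-i}) = b_i(t, x_{-i}). -/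
open Set Filter Topology

/-- For the generalised inverse `bᵢ` of a boundary `b₁` that is
non-decreasing in every argument, the shifted inverse
`bᵢ^ε(t, x₁, xr) := bᵢ(t+ε, x₁−ε, xr+ε) − ε` is non-increasing in `ε`, the limit
`bᵢ^{0+} = lim_{ε↓0} bᵢ^ε` exists, satisfies `bᵢ^{0+} ≤ bᵢ`, and equals `bᵢ` whenever the
stopping set `D = {(t,x) ∈ ℝ₊ × ℝᵐ : x₁ ≤ b₁(t,x₋₁)}` is closed. -/
theorem stmt_7 {k : ℕ} (b₁ : ℝ → (Fin k → ℝ) → ℝ)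
    (hmt : ∀ z, Monotone fun t => b₁ t z)
    (hmx : ∀ t, Monotone (b₁ t))
    (i : Fin k)
    (bi : ℝ → ℝ → (Fin k → ℝ) → EReal)
    (hbi : ∀ (t x₁ : ℝ) (xr : Fin k → ℝ),
      bi t x₁ xr =
        sSup ((fun y : ℝ => (y : EReal)) ''
          {y : ℝ | b₁ t (Function.update xr i y) < x₁}))
    (t x₁ : ℝ) (ht : 0 ≤ t) (xr : Fin k → ℝ) :
    (∀ ε₁ ε₂ : ℝ, 0 < ε₁ → ε₁ ≤ ε₂ →
      bi (t + ε₂) (x₁ - ε₂) (fun j => xr j + ε₂) - (ε₂ : EReal)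
        ≤ bi (t + ε₁) (x₁ - ε₁) (fun j => xr j + ε₁) - (ε₁ : EReal)) ∧
    ∃ L : EReal,
      Tendsto (fun ε : ℝ => bi (t + ε) (x₁ - ε) (fun j => xr j + ε) - (ε : EReal))
        (nhdsWithin 0 (Ioi 0)) (nhds L) ∧
      L ≤ bi t x₁ xr ∧
      (IsClosed {p : ℝ × ℝ × (Fin k → ℝ) | 0 ≤ p.1 ∧ p.2.1 ≤ b₁ p.1 p.2.2} →
        L = bi t x₁ xr) := by
  set f : ℝ → EReal :=
    fun ε => bi (t + ε) (x₁ - ε) (fun j => xr j + ε) - (ε : EReal) with hf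
  -- general monotonicity, allowing ε₁ = 0
  have key : ∀ ε₁ ε₂ : ℝ, 0 ≤ ε₁ → ε₁ ≤ ε₂ → f ε₂ ≤ f ε₁ := by
    intro ε₁ ε₂ h1 h12
    simp only [hf, hbi]
    set S₁ := {y : ℝ | b₁ (t + ε₁) (Function.update (fun j => xr j + ε₁) i y) < x₁ - ε₁}
    set S₂ := {y : ℝ | b₁ (t + ε₂) (Function.update (fun j => xr j + ε₂) i y) < x₁ - ε₂}
    have hsub : sSup ((fun y : ℝ => (y : EReal)) '' S₂)
        ≤ sSup ((fun y : ℝ => (y : EReal)) '' S₁) + ((ε₂ - ε₁ : ℝ) : EReal) := by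
      apply sSup_le
      rintro z ⟨y, hy, rfl⟩
      have hmem : y - (ε₂ - ε₁) ∈ S₁ := by
        have hle : (Function.update (fun j => xr j + ε₁) i (y - (ε₂ - ε₁)))
            ≤ (Function.update (fun j => xr j + ε₂) i y) := by
          intro j
          by_cases hj : j = i
          · subst hj; simp [Function.update_self]; linarith
          · simp [Function.update_of_ne hj]; linarith
        have h1' : b₁ (t + ε₁) (Function.update (fun j => xr j + ε₁) i (y - (ε₂ - ε₁)))
            ≤ b₁ (t + ε₂) (Function.update (fun j => xr j + ε₂) i y) :=
          le_trans (hmt _ (by linarith)) (hmx _ hle)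
        have := hy
        simp only [S₂, mem_setOf_eq] at this
        simp only [S₁, mem_setOf_eq]
        linarith
      have h1' : ((y - (ε₂ - ε₁) : ℝ) : EReal) ≤ sSup ((fun y : ℝ => (y : EReal)) '' S₁) :=
        le_sSup ⟨_, hmem, rfl⟩
      calc (y : EReal) = ((y - (ε₂ - ε₁) : ℝ) : EReal) + ((ε₂ - ε₁ : ℝ) : EReal) := by
            rw [← EReal.coe_add]; norm_num
        _ ≤ sSup ((fun y : ℝ => (y : EReal)) '' S₁) + ((ε₂ - ε₁ : ℝ) : EReal) :=
            add_le_add_left h1' _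
    calc sSup ((fun y : ℝ => (y : EReal)) '' S₂) - (ε₂ : EReal)
        ≤ (sSup ((fun y : ℝ => (y : EReal)) '' S₁) + ((ε₂ - ε₁ : ℝ) : EReal)) - (ε₂ : EReal) :=
          EReal.sub_le_sub hsub le_rfl
      _ = sSup ((fun y : ℝ => (y : EReal)) '' S₁) - (ε₁ : EReal) := by
          have hr : (ε₂ + -ε₁ + -ε₂ : ℝ) = -ε₁ := by ring
          rw [sub_eq_add_neg, sub_eq_add_neg, add_assoc, ← EReal.coe_neg, ← EReal.coe_add, hr,
            EReal.coe_neg, ← sub_eq_add_neg]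
  have hf0 : f 0 = bi t x₁ xr := by
    simp only [hf]
    norm_num
  have hanti : AntitoneOn f (Ioi (0:ℝ)) := fun a ha b _ hab => key a b (le_of_lt ha) hab
  have hbdd : BddAbove (f '' Ioi (0:ℝ)) := OrderTop.bddAbove _
  refine ⟨fun ε₁ ε₂ h1 h2 => key ε₁ ε₂ h1.le h2, sSup (f '' Ioi (0:ℝ)),
    hanti.tendsto_nhdsGT hbdd, ?_, ?_⟩
  · apply sSup_le
    rintro z ⟨ε, hε, rfl⟩
    rw [← hf0]
    exact key 0 ε le_rfl (le_of_lt hε)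
  · intro hD
    refine le_antisymm (by
      apply sSup_le
      rintro z ⟨ε, hε, rfl⟩
      rw [← hf0]
      exact key 0 ε le_rfl (le_of_lt hε)) ?_
    rw [hbi]
    apply sSup_le
    rintro z ⟨y, hy, rfl⟩
    simp only [mem_setOf_eq] at hy
    -- the point (t, x₁, update xr i y) lies in the open complement of D
    have hopen : IsOpen {p : ℝ × ℝ × (Fin k → ℝ) | 0 ≤ p.1 ∧ p.2.1 ≤ b₁ p.1 p.2.2}ᶜ :=
      hD.isOpen_compl
    have hmemc : (t, x₁, Function.update xr i y) ∈
        {p : ℝ × ℝ × (Fin k → ℝ) | 0 ≤ p.1 ∧ p.2.1 ≤ b₁ p.1 p.2.2}ᶜ := by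
      simp only [mem_compl_iff, mem_setOf_eq, not_and, not_le]
      intro _
      exact hy
    have hcont : Continuous (fun ε : ℝ =>
        ((t + ε, x₁ - ε, fun j => (Function.update xr i y) j + ε) : ℝ × ℝ × (Fin k → ℝ))) := by
      fun_prop
    have hev : ∀ᶠ ε : ℝ in 𝓝 0,
        ((t + ε, x₁ - ε, fun j => (Function.update xr i y) j + ε) : ℝ × ℝ × (Fin k → ℝ)) ∈
          {p : ℝ × ℝ × (Fin k → ℝ) | 0 ≤ p.1 ∧ p.2.1 ≤ b₁ p.1 p.2.2}ᶜ := by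
      have h0 : ((t + (0:ℝ), x₁ - 0, fun j => (Function.update xr i y) j + 0)
          : ℝ × ℝ × (Fin k → ℝ)) ∈
          {p : ℝ × ℝ × (Fin k → ℝ) | 0 ≤ p.1 ∧ p.2.1 ≤ b₁ p.1 p.2.2}ᶜ := by
        simpa using hmemc
      exact hcont.continuousAt.eventually_mem (hopen.mem_nhds h0)
    have hev' : ∀ᶠ ε : ℝ in 𝓝[>] (0:ℝ),
        ((t + ε, x₁ - ε, fun j => (Function.update xr i y) j + ε) : ℝ × ℝ × (Fin k → ℝ)) ∈
          {p : ℝ × ℝ × (Fin k → ℝ) | 0 ≤ p.1 ∧ p.2.1 ≤ b₁ p.1 p.2.2}ᶜ :=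
      hev.filter_mono nhdsWithin_le_nhds
    obtain ⟨ε, hεmem, hεpos⟩ := (hev'.and self_mem_nhdsWithin).exists
    -- from membership: b₁ (t+ε) (update (xr+ε) i (y+ε)) < x₁ - ε
    have hupd : (fun j => (Function.update xr i y) j + ε)
        = Function.update (fun j => xr j + ε) i (y + ε) := by
      funext j
      by_cases hj : j = i
      · subst hj; simp
      · simp [Function.update_of_ne hj]
    simp only [mem_compl_iff, mem_setOf_eq, not_and, not_le] at hεmem
    have hlt : b₁ (t + ε) (Function.update (fun j => xr j + ε) i (y + ε)) < x₁ - ε := by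
      rw [← hupd]
      exact hεmem (by linarith [hεpos])
    -- hence y + ε is in S ε, so y ≤ f ε ≤ L
    have h1 : ((y + ε : ℝ) : EReal) ≤
        sSup ((fun y : ℝ => (y : EReal)) ''
          {z : ℝ | b₁ (t + ε) (Function.update (fun j => xr j + ε) i z) < x₁ - ε}) :=
      le_sSup ⟨_, hlt, rfl⟩
    have h2 : (y : EReal) ≤ f ε := by
      have := EReal.sub_le_sub h1 (le_refl (ε : EReal))
      simp only [hf, hbi]
      calc (y : EReal) = ((y + ε : ℝ) : EReal) - (ε : EReal) := by
            rw [← EReal.coe_sub]; norm_num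
        _ ≤ _ := this
    exact h2.trans (le_sSup ⟨ε, hεpos, rfl⟩)
end

section
/- Let b₁ : ℝ₊ × ℝ^{m-1} → ℝ be non-decreasing in each variable and set b₁^ε(t, z_{-1}) := b₁(t+ε, z_2+ε,…,z_m+ε) + ε, and let C₁^ε := {(t,x) ∈ ℝ₊ × ℝ^m : x₁ > b₁^ε(t, x_{-1})} and C := {(t,x) : x₁ > b₁(t, x_{-1})}. Then for every ε > 0 the closure of C₁^ε is strictly contained in C, i.e. closure(C₁^ε) ⊆ C. -/
open Set Filter Topology

/-- With `b₁` non-decreasing in every variable, `b₁^ε(t,z) = b₁(t+ε,z+ε)+ε`,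
`C₁^ε = {(t,x) ∈ ℝ₊ × ℝᵐ : x₁ > b₁^ε(t,x₋₁)}` and `C = {(t,x) ∈ ℝ₊ × ℝᵐ : x₁ > b₁(t,x₋₁)}`
(with `D = Cᶜ` closed), the closure of `C₁^ε` is contained in `C` for every `ε > 0`. -/
theorem stmt_8 {k : ℕ} (b₁ : ℝ → (Fin k → ℝ) → ℝ)
    (hmt : ∀ z, Monotone fun t => b₁ t z)
    (hmx : ∀ t, Monotone (b₁ t))
    (hD : IsClosed {p : ℝ × ℝ × (Fin k → ℝ) | 0 ≤ p.1 ∧ p.2.1 ≤ b₁ p.1 p.2.2})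
    (ε : ℝ) (hε : 0 < ε) :
    closure {p : ℝ × ℝ × (Fin k → ℝ) |
        0 ≤ p.1 ∧ b₁ (p.1 + ε) (fun j => p.2.2 j + ε) + ε < p.2.1}
      ⊆ {p : ℝ × ℝ × (Fin k → ℝ) | 0 ≤ p.1 ∧ b₁ p.1 p.2.2 < p.2.1} := by
  intro p hp
  have ht : 0 ≤ p.1 := by
    have h1 : p ∈ closure {q : ℝ × ℝ × (Fin k → ℝ) | 0 ≤ q.1} :=
      closure_mono (fun q hq => hq.1) hp
    have h2 : IsClosed {q : ℝ × ℝ × (Fin k → ℝ) | 0 ≤ q.1} :=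
      isClosed_le continuous_const continuous_fst
    rwa [h2.closure_eq] at h1
  refine ⟨ht, ?_⟩
  rw [Metric.mem_closure_iff] at hp
  obtain ⟨q, hq, hdist⟩ := hp ε hε
  have h1 : dist p.1 q.1 < ε := lt_of_le_of_lt (by rw [Prod.dist_eq]; exact le_max_left _ _) hdist
  have h2 : dist p.2 q.2 ≤ dist p q := by rw [Prod.dist_eq]; exact le_max_right _ _
  have h21 : dist p.2.1 q.2.1 < ε := lt_of_le_of_lt ((by rw [Prod.dist_eq]; exact le_max_left _ _ : dist p.2.1 q.2.1 ≤ dist p.2 q.2).trans h2) hdist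
  have h22 : ∀ j, dist (p.2.2 j) (q.2.2 j) < ε := fun j =>
    lt_of_le_of_lt ((dist_le_pi_dist p.2.2 q.2.2 j).trans ((by rw [Prod.dist_eq]; exact le_max_right _ _ : dist p.2.2 q.2.2 ≤ dist p.2 q.2).trans h2)) hdist
  rw [Real.dist_eq, abs_lt] at h1 h21
  have hle1 : p.1 ≤ q.1 + ε := by linarith [h1.2]
  have hle2 : ∀ j, p.2.2 j ≤ q.2.2 j + ε := fun j => by
    have := (abs_lt.mp (by rw [← Real.dist_eq]; exact h22 j)).2
    linarith
  calc b₁ p.1 p.2.2 ≤ b₁ (q.1 + ε) p.2.2 := hmt _ hle1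
    _ ≤ b₁ (q.1 + ε) (fun j => q.2.2 j + ε) := hmx _ hle2
    _ < q.2.1 - ε := by linarith [hq.2]
    _ ≤ p.2.1 := by linarith [h21.1]
end

section
/- In the setting of the Yamada–Watanabe comparison proof: there exists a sequence of functions (φ_n) ⊂ C²(ℝ) with φ_n ≥ 0 such that (i) φ_n(y) → y⁺ pointwise as n → ∞, (ii) |φ_n'(y)| ≤ 1 for all y, φ_n'(y) = 0 for y ≤ 0, and φ_n'(y) ≥ 0 for y > 0, and (iii) 0 ≤ φ_n''(y) h²(y) ≤ 2/n for all y > 0, where h : ℝ₊ → ℝ₊ is a given increasing function with ∫_0^ε h(u)^{-2} du = ∞ for every ε > 0. -/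
open Set Filter Topology MeasureTheory intervalIntegral

noncomputable def ywH (h : ℝ → ℝ) : ℝ → ℝ := fun u => if u ≤ 0 then 0 else h u

lemma ywH_mono (h : ℝ → ℝ) (hpos : ∀ y > (0:ℝ), 0 < h y) (hmono : MonotoneOn h (Ioi 0)) :
    Monotone (ywH h) := by
  intro u v huv
  unfold ywH
  by_cases hv : v ≤ 0
  · have hu : u ≤ 0 := le_trans huv hv
    simp [hu, hv]
  · push_neg at hv
    by_cases hu : u ≤ 0
    · simp [hu, not_le.2 hv, (hpos v hv).le]
    · push_neg at hu
      simp only [not_le.2 hv, not_le.2 hu, if_false]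
      exact hmono hu hv huv

lemma ywH_eq (h : ℝ → ℝ) {u : ℝ} (hu : 0 < u) : ywH h u = h u := by
  simp [ywH, not_le.2 hu]

lemma ywH_pos (h : ℝ → ℝ) (hpos : ∀ y > (0:ℝ), 0 < h y) {u : ℝ} (hu : 0 < u) :
    0 < ywH h u := by rw [ywH_eq h hu]; exact hpos u hu

/-- the density function `2 / (n h(u)²)` using the monotone extension -/
noncomputable def ywF (h : ℝ → ℝ) (n : ℕ) : ℝ → ℝ := fun u => 2 / (n * ywH h u ^ 2)

lemma ywF_meas (h : ℝ → ℝ) (hpos : ∀ y > (0:ℝ), 0 < h y) (hmono : MonotoneOn h (Ioi 0))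
    (n : ℕ) : Measurable (ywF h n) := by
  have : Measurable (ywH h) := (ywH_mono h hpos hmono).measurable
  unfold ywF
  fun_prop

lemma ywF_nonneg (h : ℝ → ℝ) (hpos : ∀ y > (0:ℝ), 0 < h y) (n : ℕ) (u : ℝ) :
    0 ≤ ywF h n u := by
  unfold ywF
  positivity

lemma ywF_pos (h : ℝ → ℝ) (hpos : ∀ y > (0:ℝ), 0 < h y) (n : ℕ) (hn : 1 ≤ n) {u : ℝ}
    (hu : 0 < u) : 0 < ywF h n u := by
  unfold ywF
  have h1 := ywH_pos h hpos hu
  have h2 : (0:ℝ) < n := by exact_mod_cast hn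
  positivity

lemma ywF_anti (h : ℝ → ℝ) (hpos : ∀ y > (0:ℝ), 0 < h y) (hmono : MonotoneOn h (Ioi 0))
    (n : ℕ) (hn : 1 ≤ n) : AntitoneOn (ywF h n) (Ioi 0) := by
  intro u hu v hv huv
  unfold ywF
  have h2 : (0:ℝ) < n := by exact_mod_cast hn
  have h1 := ywH_pos h hpos (mem_Ioi.1 hu)
  have h3 := ywH_mono h hpos hmono huv
  have h4 : n * ywH h u ^ 2 ≤ n * ywH h v ^ 2 :=
    mul_le_mul_of_nonneg_left (pow_le_pow_left₀ h1.le h3 2) h2.le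
  have h5 : (0:ℝ) < n * ywH h u ^ 2 := by positivity
  exact div_le_div_of_nonneg_left (by norm_num) h5 h4

lemma yw_exists_eps (h : ℝ → ℝ) (hpos : ∀ y > (0:ℝ), 0 < h y) (hmono : MonotoneOn h (Ioi 0))
    (hYW : ∀ ε > (0:ℝ), ¬ MeasureTheory.IntegrableOn (fun u => ((h u) ^ 2)⁻¹) (Ioc 0 ε))
    (n : ℕ) (hn : 1 ≤ n) (c : ℝ) (hc : 0 < c) :
    ∃ ε : ℝ, 0 < ε ∧ ε < c ∧ IntegrableOn (ywF h n) (Ioc ε c) ∧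
      2 ≤ ∫ u in Ioc ε c, ywF h n u := by
  classical
  set F := ywF h n with hF
  have meas : Measurable F := ywF_meas h hpos hmono n
  have hn0 : (0:ℝ) < n := by exact_mod_cast hn
  set ν : Measure ℝ := volume.withDensity (fun u => ENNReal.ofReal (F u)) with hν
  have hνapp : ∀ s : Set ℝ, MeasurableSet s → ν s = ∫⁻ u in s, ENNReal.ofReal (F u) := by
    intro s hs
    rw [hν, withDensity_apply _ hs]
  -- pointwise identity : (ywH h u ^ 2)⁻¹ = (n/2) * F u
  have hpt : ∀ u : ℝ, (ywH h u ^ 2)⁻¹ = (n / 2) * F u := by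
    intro u
    by_cases hu : ywH h u = 0
    · simp [hF, ywF, hu]
    · have hn0' := hn0.ne'
      rw [hF, ywF]
      field_simp
  -- ν (Ioc 0 c) = ⊤
  have key : ν (Ioc 0 c) = ⊤ := by
    by_contra hfin
    apply hYW c hc
    have hg : Measurable fun u => (ywH h u ^ 2)⁻¹ := by
      have : Measurable (ywH h) := (ywH_mono h hpos hmono).measurable
      fun_prop
    have hInt : IntegrableOn (fun u => (ywH h u ^ 2)⁻¹) (Ioc 0 c) := by
      constructor
      · exact hg.aestronglyMeasurable
      · rw [hasFiniteIntegral_iff_ofReal (Filter.Eventually.of_forall (fun u => by positivity))]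
        have : ∀ u : ℝ, ENNReal.ofReal ((ywH h u ^ 2)⁻¹)
            = ENNReal.ofReal (n / 2) * ENNReal.ofReal (F u) := by
          intro u
          rw [hpt u, ENNReal.ofReal_mul (by positivity)]
        simp_rw [this]
        rw [lintegral_const_mul' _ _ ENNReal.ofReal_ne_top]
        have h2 : (∫⁻ u in Ioc 0 c, ENNReal.ofReal (F u)) ≠ ⊤ := by
          rw [← hνapp _ measurableSet_Ioc]; exact hfin
        exact ENNReal.mul_lt_top ENNReal.ofReal_lt_top h2.lt_top
    refine hInt.congr_fun (fun u hu => ?_) measurableSet_Ioc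
    show (ywH h u ^ 2)⁻¹ = (h u ^ 2)⁻¹
    rw [ywH_eq h hu.1]
  -- increasing family of sets
  set s : ℕ → Set ℝ := fun k => Ioc (c / (k + 2)) c with hs
  have hmonos : Monotone s := by
    intro i j hij
    apply Ioc_subset_Ioc_left
    apply div_le_div_of_nonneg_left hc.le (by positivity)
    have : (i:ℝ) ≤ j := Nat.cast_le.mpr hij
    linarith
  have hunion : (⋃ k, s k) = Ioc 0 c := by
    ext u
    simp only [hs, mem_iUnion, mem_Ioc]
    constructor
    · rintro ⟨k, hk1, hk2⟩
      refine ⟨lt_trans (by positivity) hk1, hk2⟩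
    · rintro ⟨hu0, huc⟩
      obtain ⟨k, hk⟩ := exists_nat_gt (c / u)
      refine ⟨k, ?_, huc⟩
      rw [div_lt_iff₀ (by positivity)]
      rw [div_lt_iff₀ hu0] at hk
      nlinarith
  have hsup : (⨆ k, ν (s k)) = ⊤ := by
    rw [← Directed.measure_iUnion (hmonos.directed_le), hunion, key]
  have h2top : (ENNReal.ofReal 2) < ⨆ k, ν (s k) := hsup ▸ ENNReal.ofReal_lt_top
  obtain ⟨k, hk⟩ := lt_iSup_iff.1 h2top
  set ε : ℝ := c / (k + 2) with hε
  have hε0 : 0 < ε := by positivity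
  have hεc : ε < c := by
    rw [hε]
    have : (0:ℝ) ≤ k := Nat.cast_nonneg k
    exact div_lt_self hc (by linarith)
  -- integrability of F on Ioc ε c
  have hbdd : ∀ u ∈ Ioc ε c, ‖F u‖ ≤ F ε := by
    intro u hu
    rw [Real.norm_of_nonneg (ywF_nonneg h hpos n u)]
    exact ywF_anti h hpos hmono n hn (mem_Ioi.2 hε0) (mem_Ioi.2 (lt_trans hε0 hu.1)) hu.1.le
  have hIF : IntegrableOn F (Ioc ε c) := by
    constructor
    · exact meas.aestronglyMeasurable
    · apply MeasureTheory.HasFiniteIntegral.of_bounded (C := F ε)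
      exact (ae_restrict_iff' measurableSet_Ioc).2 (Filter.Eventually.of_forall hbdd)
  -- the finite lintegral
  have hfinsk : ν (s k) ≠ ⊤ := by
    rw [hνapp _ measurableSet_Ioc]
    have := hIF.2
    rw [hasFiniteIntegral_iff_ofReal
      (Filter.Eventually.of_forall (fun u => ywF_nonneg h hpos n u))] at this
    exact this.ne
  refine ⟨ε, hε0, hεc, hIF, ?_⟩
  have heq : ∫ u in Ioc ε c, F u = (ν (s k)).toReal := by
    rw [integral_eq_lintegral_of_nonneg_ae
      (Filter.Eventually.of_forall (fun u => ywF_nonneg h hpos n u)) meas.aestronglyMeasurable,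
      hνapp _ measurableSet_Ioc]
  rw [heq]
  have := ENNReal.toReal_le_toReal ENNReal.ofReal_ne_top hfinsk |>.2 hk.le
  rwa [ENNReal.toReal_ofReal (by norm_num)] at this

lemma yw_exists_psi (h : ℝ → ℝ) (hpos : ∀ y > (0:ℝ), 0 < h y) (hmono : MonotoneOn h (Ioi 0))
    (hYW : ∀ ε > (0:ℝ), ¬ MeasureTheory.IntegrableOn (fun u => ((h u) ^ 2)⁻¹) (Ioc 0 ε))
    (n : ℕ) (hn : 1 ≤ n) (b : ℝ) (hb : 0 < b) :
    ∃ ψ : ℝ → ℝ, Continuous ψ ∧ (∀ u, 0 ≤ ψ u) ∧ (∀ u, u ≤ 0 → ψ u = 0) ∧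
      (∀ u, b ≤ u → ψ u = 0) ∧ (∀ u, 0 < u → ψ u * h u ^ 2 ≤ 2 / n) ∧
      (∀ y, b ≤ y → ∫ u in (0:ℝ)..y, ψ u = 1) := by
  classical
  set f := ywF h n with hf
  have fmeas : Measurable f := ywF_meas h hpos hmono n
  have fnn : ∀ u, 0 ≤ f u := ywF_nonneg h hpos n
  have fanti : AntitoneOn f (Ioi 0) := ywF_anti h hpos hmono n hn
  set b' : ℝ := b / 2 with hb'
  have hb'0 : 0 < b' := by positivity
  have hb'b : b' < b := by rw [hb']; linarith
  obtain ⟨ε, hε0, hεb', hIF, hI2⟩ := yw_exists_eps h hpos hmono hYW n hn b' hb'0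
  set δ : ℝ := min (min (ε / 4) ((b' - ε) / 2)) (1 / (f ε + 1)) with hδ
  have hfε0 : 0 ≤ f ε := fnn ε
  have hδ0 : 0 < δ := by
    apply lt_min (lt_min (by positivity) (by linarith))
    positivity
  have hδε4 : δ ≤ ε / 4 := le_trans (min_le_left _ _) (min_le_left _ _)
  have hδb' : δ ≤ (b' - ε) / 2 := le_trans (min_le_left _ _) (min_le_right _ _)
  have hδf : δ ≤ 1 / (f ε + 1) := min_le_right _ _
  set G : ℝ → ℝ := (Ioc (ε/2) b').indicator f with hG
  have hGnn : ∀ u, 0 ≤ G u := fun u => by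
    rw [hG]; exact indicator_nonneg (fun t _ => fnn t) u
  have hGle : ∀ u, 0 < u → ∀ t, u ≤ t → G t ≤ f u := by
    intro u hu t hut
    rw [hG, indicator]
    split_ifs with ht
    · exact fanti (mem_Ioi.2 hu) (mem_Ioi.2 (lt_of_lt_of_le hu hut)) hut
    · exact fnn u
  have hGzero : ∀ t, t ≤ ε/2 ∨ b' < t → G t = 0 := by
    intro t ht
    rw [hG, indicator_apply_eq_zero]
    intro htmem
    rcases ht with h1 | h1
    · exact absurd htmem.1 (not_lt.2 h1)
    · exact absurd htmem.2 (not_le.2 h1)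
  -- G is integrable
  have hGint : MeasureTheory.Integrable G := by
    rw [hG, MeasureTheory.integrable_indicator_iff measurableSet_Ioc]
    constructor
    · exact fmeas.aestronglyMeasurable
    · apply MeasureTheory.HasFiniteIntegral.of_bounded (C := f (ε/2))
      apply (ae_restrict_iff' measurableSet_Ioc).2 (Filter.Eventually.of_forall ?_)
      intro u hu
      rw [Real.norm_of_nonneg (fnn u)]
      exact fanti (mem_Ioi.2 (by positivity)) (mem_Ioi.2 (lt_trans (by positivity) hu.1)) hu.1.le
  have hGii : ∀ a c : ℝ, IntervalIntegrable G volume a c := fun a c =>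
    hGint.intervalIntegrable
  -- primitive of G
  set P : ℝ → ℝ := fun x => ∫ t in (0:ℝ)..x, G t with hP
  have hPcont : Continuous P := intervalIntegral.continuous_primitive hGii 0
  have hPdiff : ∀ x y : ℝ, P y - P x = ∫ t in x..y, G t := by
    intro x y
    rw [hP]
    simp only
    rw [← intervalIntegral.integral_interval_sub_left (hGii 0 y) (hGii 0 x)]
  have hPmono : Monotone P := by
    intro x y hxy
    have : P y - P x = ∫ t in x..y, G t := hPdiff x y
    have h2 : 0 ≤ ∫ t in x..y, G t :=
      intervalIntegral.integral_nonneg hxy (fun t _ => hGnn t)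
    linarith
  -- the mollified function
  set ψ₀ : ℝ → ℝ := fun u => (P (u + δ) - P u) / δ with hψ₀
  have hψ₀cont : Continuous ψ₀ := by
    apply Continuous.div_const
    exact (hPcont.comp (continuous_id.add continuous_const)).sub hPcont
  have hψ₀eq : ∀ u, ψ₀ u = (∫ t in u..(u+δ), G t) / δ := by
    intro u; rw [hψ₀]; simp only; rw [hPdiff]
  have hψ₀nn : ∀ u, 0 ≤ ψ₀ u := by
    intro u
    rw [hψ₀eq]
    apply div_nonneg _ hδ0.le
    exact intervalIntegral.integral_nonneg (by linarith) (fun t _ => hGnn t)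
  have hψ₀zero : ∀ u, u + δ ≤ ε/2 ∨ b ≤ u → ψ₀ u = 0 := by
    intro u hu
    rw [hψ₀eq]
    have : ∫ t in u..(u+δ), G t = ∫ t in u..(u+δ), (0:ℝ) := by
      apply intervalIntegral.integral_congr
      intro t ht
      rw [uIcc_of_le (by linarith)] at ht
      apply hGzero
      rcases hu with h1 | h1
      · exact Or.inl (le_trans ht.2 h1)
      · exact Or.inr (lt_of_lt_of_le hb'b (le_trans h1 ht.1))
    rw [this]
    simp
  -- pointwise upper bound
  have hψ₀le : ∀ u, 0 < u → ψ₀ u ≤ f u := by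
    intro u hu
    rw [hψ₀eq, div_le_iff₀ hδ0]
    have h1 : ∫ t in u..(u+δ), G t ≤ ∫ t in u..(u+δ), f u := by
      apply intervalIntegral.integral_mono_on (μ := volume) (by linarith) (hGii u (u+δ))
        intervalIntegrable_const
      intro t ht
      exact hGle u hu t ht.1
    rw [intervalIntegral.integral_const] at h1
    calc ∫ t in u..(u+δ), G t ≤ (u + δ - u) • f u := h1
    _ = f u * δ := by rw [smul_eq_mul]; ring
  have hεδb' : ε + δ ≤ b' := by linarith
  have hfii : ∀ a c : ℝ, ε ≤ a → a ≤ c → c ≤ b' → IntervalIntegrable f volume a c := by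
    intro a c ha hac hcb
    rw [intervalIntegrable_iff_integrableOn_Ioc_of_le hac]
    exact hIF.mono_set (Ioc_subset_Ioc ha hcb)
  -- the middle mass is at least 1
  have hmid : 1 ≤ ∫ u in ε..b', ψ₀ u := by
    have c0 : ∫ u in ε..b', ψ₀ u
        = ((∫ u in ε..b', P (u + δ)) - ∫ u in ε..b', P u) / δ := by
      have hc2 : Continuous fun u : ℝ => P (u + δ) := by exact hPcont.comp (continuous_id.add continuous_const)
      have hcomp : IntervalIntegrable (fun u : ℝ => P (u + δ)) volume ε b' :=
        hc2.intervalIntegrable ε b'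
      rw [hψ₀]
      simp only
      rw [intervalIntegral.integral_div, intervalIntegral.integral_sub hcomp
        (hPcont.intervalIntegrable _ _)]
    have c1 : ∫ u in ε..b', P (u + δ) = ∫ u in (ε+δ)..(b'+δ), P u :=
      intervalIntegral.integral_comp_add_right P δ
    have c2 : ∫ u in (ε+δ)..(b'+δ), P u
        = (∫ u in (ε+δ)..b', P u) + ∫ u in b'..(b'+δ), P u :=
      (intervalIntegral.integral_add_adjacent_intervals
        (hPcont.intervalIntegrable _ _) (hPcont.intervalIntegrable _ _)).symm
    have c3 : ∫ u in ε..b', P u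
        = (∫ u in ε..(ε+δ), P u) + ∫ u in (ε+δ)..b', P u :=
      (intervalIntegral.integral_add_adjacent_intervals
        (hPcont.intervalIntegrable _ _) (hPcont.intervalIntegrable _ _)).symm
    have c4 : δ * P b' ≤ ∫ u in b'..(b'+δ), P u := by
      have := intervalIntegral.integral_mono_on (μ := volume) (by linarith : b' ≤ b' + δ)
        (intervalIntegrable_const (μ := volume)) (hPcont.intervalIntegrable _ _)
        (fun t ht => hPmono ht.1)
      rw [intervalIntegral.integral_const] at this
      calc δ * P b' = (b' + δ - b') • P b' := by rw [smul_eq_mul]; ring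
      _ ≤ _ := this
    have c5 : ∫ u in ε..(ε+δ), P u ≤ δ * P (ε+δ) := by
      have := intervalIntegral.integral_mono_on (μ := volume) (by linarith : ε ≤ ε + δ)
        (hPcont.intervalIntegrable _ _) intervalIntegrable_const
        (fun t ht => hPmono ht.2)
      rw [intervalIntegral.integral_const] at this
      calc ∫ u in ε..(ε+δ), P u ≤ (ε + δ - ε) • P (ε+δ) := this
      _ = δ * P (ε+δ) := by rw [smul_eq_mul]; ring
    have c6 : P b' - P (ε+δ) = ∫ t in (ε+δ)..b', G t := hPdiff _ _
    have c7 : ∫ t in (ε+δ)..b', G t = ∫ t in (ε+δ)..b', f t := by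
      apply intervalIntegral.integral_congr
      intro t ht
      rw [uIcc_of_le hεδb'] at ht
      rw [hG, indicator_of_mem]
      exact ⟨by linarith [ht.1], ht.2⟩
    have c8 : ∫ t in ε..(ε+δ), f t ≤ 1 := by
      have hb1 : ∫ t in ε..(ε+δ), f t ≤ δ * f ε := by
        have := intervalIntegral.integral_mono_on (μ := volume) (by linarith : ε ≤ ε + δ)
          (hfii ε (ε+δ) le_rfl (by linarith) hεδb') intervalIntegrable_const
          (fun t ht => fanti (mem_Ioi.2 hε0) (mem_Ioi.2 (lt_of_lt_of_le hε0 ht.1)) ht.1)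
        rw [intervalIntegral.integral_const] at this
        calc ∫ t in ε..(ε+δ), f t ≤ (ε + δ - ε) • f ε := this
        _ = δ * f ε := by rw [smul_eq_mul]; ring
      have hb2 : δ * f ε ≤ (1 / (f ε + 1)) * f ε :=
        mul_le_mul_of_nonneg_right hδf hfε0
      have hb3 : (1 / (f ε + 1)) * f ε ≤ 1 := by
        rw [div_mul_eq_mul_div, one_mul, div_le_one (by positivity)]
        linarith
      linarith
    have c9 : (2:ℝ) ≤ ∫ t in ε..b', f t := by
      rw [intervalIntegral.integral_of_le hεb'.le]
      exact hI2
    have c10 : ∫ t in ε..b', f t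
        = (∫ t in ε..(ε+δ), f t) + ∫ t in (ε+δ)..b', f t :=
      (intervalIntegral.integral_add_adjacent_intervals
        (hfii ε (ε+δ) le_rfl (by linarith) hεδb')
        (hfii (ε+δ) b' (by linarith) hεδb' le_rfl)).symm
    have c11 : (1:ℝ) ≤ ∫ t in (ε+δ)..b', f t := by linarith
    rw [c0, c1, c2, c3]
    rw [le_div_iff₀ hδ0]
    have : δ * (P b' - P (ε + δ)) ≥ δ * 1 := by
      apply mul_le_mul_of_nonneg_left _ hδ0.le
      rw [c6, c7]
      exact c11
    linarith [c4, c5, this]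
  -- total mass
  set J : ℝ := ∫ u in (0:ℝ)..b, ψ₀ u with hJ
  have hJsplit : J = (∫ u in (0:ℝ)..ε, ψ₀ u) + (∫ u in ε..b', ψ₀ u) + ∫ u in b'..b, ψ₀ u := by
    rw [hJ, ← intervalIntegral.integral_add_adjacent_intervals
      (hψ₀cont.intervalIntegrable 0 b') (hψ₀cont.intervalIntegrable b' b),
      ← intervalIntegral.integral_add_adjacent_intervals
      (hψ₀cont.intervalIntegrable 0 ε) (hψ₀cont.intervalIntegrable ε b')]
  have hJ1 : 1 ≤ J := by
    have p1 : 0 ≤ ∫ u in (0:ℝ)..ε, ψ₀ u :=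
      intervalIntegral.integral_nonneg hε0.le (fun t _ => hψ₀nn t)
    have p2 : 0 ≤ ∫ u in b'..b, ψ₀ u :=
      intervalIntegral.integral_nonneg hb'b.le (fun t _ => hψ₀nn t)
    rw [hJsplit]
    linarith
  have hJ0 : 0 < J := lt_of_lt_of_le one_pos hJ1
  -- the normalized function
  refine ⟨fun u => ψ₀ u / J, hψ₀cont.div_const J, fun u => div_nonneg (hψ₀nn u) hJ0.le,
    ?_, ?_, ?_, ?_⟩
  · intro u hu
    show ψ₀ u / J = 0
    rw [hψ₀zero u (Or.inl (by linarith)), zero_div]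
  · intro u hu
    show ψ₀ u / J = 0
    rw [hψ₀zero u (Or.inr hu), zero_div]
  · intro u hu
    show ψ₀ u / J * h u ^ 2 ≤ 2 / n
    have h1 : ψ₀ u / J ≤ ψ₀ u := div_le_self (hψ₀nn u) hJ1
    have h2 : ψ₀ u / J ≤ f u := le_trans h1 (hψ₀le u hu)
    have h3 : f u * h u ^ 2 = 2 / n := by
      rw [hf, ywF, ywH_eq h hu]
      have hhu := hpos u hu
      have hn0 : (0:ℝ) < n := by exact_mod_cast hn
      field_simp
    calc ψ₀ u / J * h u ^ 2 ≤ f u * h u ^ 2 :=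
      mul_le_mul_of_nonneg_right h2 (sq_nonneg _)
    _ = 2 / n := h3
  · intro y hy
    show ∫ u in (0:ℝ)..y, ψ₀ u / J = 1
    have e2 : ∫ u in b..y, ψ₀ u = 0 := by
      have : ∫ u in b..y, ψ₀ u = ∫ u in b..y, (0:ℝ) := by
        apply intervalIntegral.integral_congr
        intro t ht
        rw [uIcc_of_le hy] at ht
        exact hψ₀zero t (Or.inr ht.1)
      rw [this, intervalIntegral.integral_zero]
    have e3 : ∫ u in (0:ℝ)..y, ψ₀ u = J := by
      rw [← intervalIntegral.integral_add_adjacent_intervals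
        (hψ₀cont.intervalIntegrable 0 b) (hψ₀cont.intervalIntegrable b y), e2, add_zero, hJ]
    rw [intervalIntegral.integral_div, e3, div_self hJ0.ne']

/-- Existence of the Yamada–Watanabe approximating sequence `(φₙ)` of the
positive-part function: each `φₙ` is C², non-negative, `φₙ(y) → y⁺` pointwise,
`|φₙ'| ≤ 1` with `φₙ' = 0` on `(−∞,0]` and `φₙ' ≥ 0` on `(0,∞)`, and
`0 ≤ φₙ''(y) h(y)² ≤ 2/n` for `y > 0`. -/
theorem stmt_12 (h : ℝ → ℝ)
    (hpos : ∀ y > (0:ℝ), 0 < h y)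
    (hmono : MonotoneOn h (Ioi 0))
    (hYW : ∀ ε > (0:ℝ), ¬ MeasureTheory.IntegrableOn (fun u => ((h u) ^ 2)⁻¹) (Ioc 0 ε)) :
    ∃ φ : ℕ → ℝ → ℝ,
      (∀ n : ℕ, 1 ≤ n →
        ContDiff ℝ 2 (φ n) ∧
        (∀ y, 0 ≤ φ n y) ∧
        (∀ y, |deriv (φ n) y| ≤ 1) ∧
        (∀ y ≤ (0:ℝ), deriv (φ n) y = 0) ∧
        (∀ y > (0:ℝ), 0 ≤ deriv (φ n) y) ∧
        (∀ y > (0:ℝ),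
          0 ≤ deriv (deriv (φ n)) y * (h y) ^ 2 ∧
          deriv (deriv (φ n)) y * (h y) ^ 2 ≤ 2 / n)) ∧
      ∀ y : ℝ, Tendsto (fun n => φ n y) atTop (nhds (max y 0)) := by
  classical
  set B : ℕ → ℝ := fun m => 1 / ((max m 1 : ℕ) : ℝ) with hB
  have hB0 : ∀ m, 0 < B m := by
    intro m
    have h1 : (0:ℕ) < max m 1 := lt_of_lt_of_le one_pos (le_max_right m 1)
    have : (0:ℝ) < (max m 1 : ℕ) := by exact_mod_cast h1
    rw [hB]
    positivity
  have hex : ∀ m : ℕ, ∃ ψ : ℝ → ℝ, Continuous ψ ∧ (∀ u, 0 ≤ ψ u) ∧ (∀ u, u ≤ 0 → ψ u = 0) ∧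
      (∀ u, B m ≤ u → ψ u = 0) ∧ (∀ u, 0 < u → ψ u * h u ^ 2 ≤ 2 / ((max m 1 : ℕ) : ℝ)) ∧
      (∀ y, B m ≤ y → ∫ u in (0:ℝ)..y, ψ u = 1) := fun m =>
    yw_exists_psi h hpos hmono hYW (max m 1) (le_max_right m 1) (B m) (hB0 m)
  choose ψ hψc hψnn hψ0 hψb hψle hψmass using hex
  have hψii : ∀ (m : ℕ) (a c : ℝ), IntervalIntegrable (ψ m) volume a c := fun m a c =>
    (hψc m).intervalIntegrable a c
  set Φ : ℕ → ℝ → ℝ := fun m x => ∫ t in (0:ℝ)..x, ψ m t with hΦdef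
  have hΦd : ∀ m x, HasDerivAt (Φ m) (ψ m x) x := fun m x =>
    intervalIntegral.integral_hasDerivAt_right (hψii m 0 x)
      ((hψc m).stronglyMeasurableAtFilter _ _) (hψc m).continuousAt
  have hΦc : ∀ m, Continuous (Φ m) := fun m =>
    intervalIntegral.continuous_primitive (hψii m) 0
  have hΦsub : ∀ m x y, Φ m y - Φ m x = ∫ t in x..y, ψ m t := by
    intro m x y
    rw [hΦdef]
    simp only
    rw [← intervalIntegral.integral_interval_sub_left (hψii m 0 y) (hψii m 0 x)]
  have hΦmono : ∀ m, Monotone (Φ m) := by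
    intro m x y hxy
    have h1 := hΦsub m x y
    have h2 : 0 ≤ ∫ t in x..y, ψ m t :=
      intervalIntegral.integral_nonneg hxy (fun t _ => hψnn m t)
    linarith
  have hΦ0 : ∀ m, ∀ x ≤ (0:ℝ), Φ m x = 0 := by
    intro m x hx
    have h1 := hΦsub m x 0
    have h2 : ∫ t in x..(0:ℝ), ψ m t = ∫ t in x..(0:ℝ), (0:ℝ) := by
      apply intervalIntegral.integral_congr
      intro t ht
      rw [uIcc_of_le hx] at ht
      exact hψ0 m t ht.2
    rw [h2, intervalIntegral.integral_zero] at h1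
    have h3 : Φ m 0 = 0 := by rw [hΦdef]; simp
    linarith
  have hΦnn : ∀ m x, 0 ≤ Φ m x := by
    intro m x
    rcases le_total x 0 with hx | hx
    · rw [hΦ0 m x hx]
    · rw [← hΦ0 m 0 le_rfl]
      exact hΦmono m hx
  have hΦ1 : ∀ m x, Φ m x ≤ 1 := by
    intro m x
    rcases le_total x (B m) with hx | hx
    · calc Φ m x ≤ Φ m (B m) := hΦmono m hx
      _ = 1 := hψmass m (B m) le_rfl
    · exact le_of_eq (hψmass m x hx)
  have hΦeq1 : ∀ m x, B m ≤ x → Φ m x = 1 := fun m x hx => hψmass m x hx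
  set φ : ℕ → ℝ → ℝ := fun m y => ∫ v in (0:ℝ)..y, Φ m v with hφdef
  have hφd : ∀ m y, HasDerivAt (φ m) (Φ m y) y := fun m y =>
    intervalIntegral.integral_hasDerivAt_right ((hΦc m).intervalIntegrable 0 y)
      ((hΦc m).stronglyMeasurableAtFilter _ _) (hΦc m).continuousAt
  have hd1 : ∀ m, deriv (φ m) = Φ m := fun m => funext fun y => (hφd m y).deriv
  have hd2 : ∀ m, deriv (Φ m) = ψ m := fun m => funext fun x => (hΦd m x).deriv
  have hφ0 : ∀ m, ∀ y ≤ (0:ℝ), φ m y = 0 := by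
    intro m y hy
    rw [hφdef]
    simp only
    rw [intervalIntegral.integral_symm]
    have h2 : ∫ v in y..(0:ℝ), Φ m v = ∫ v in y..(0:ℝ), (0:ℝ) := by
      apply intervalIntegral.integral_congr
      intro t ht
      rw [uIcc_of_le hy] at ht
      exact hΦ0 m t ht.2
    rw [h2, intervalIntegral.integral_zero, neg_zero]
  have hφnn : ∀ m y, 0 ≤ φ m y := by
    intro m y
    rcases le_total y 0 with hy | hy
    · rw [hφ0 m y hy]
    · exact intervalIntegral.integral_nonneg hy (fun t _ => hΦnn m t)
  have hφub : ∀ m y, 0 ≤ y → φ m y ≤ y := by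
    intro m y hy
    have h1 : ∫ v in (0:ℝ)..y, Φ m v ≤ ∫ v in (0:ℝ)..y, (1:ℝ) := by
      apply intervalIntegral.integral_mono_on (μ := volume) hy
        ((hΦc m).intervalIntegrable 0 y) intervalIntegrable_const
      intro t _
      exact hΦ1 m t
    rw [intervalIntegral.integral_const, smul_eq_mul, mul_one, sub_zero] at h1
    exact h1
  have hφlb : ∀ m y, 0 < y → y - B m ≤ φ m y := by
    intro m y hy
    rcases le_total y (B m) with hyB | hyB
    · have := hφnn m y
      linarith
    · have hsplit : φ m y = (∫ v in (0:ℝ)..(B m), Φ m v) + ∫ v in (B m)..y, Φ m v := by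
        rw [hφdef]
        simp only
        rw [intervalIntegral.integral_add_adjacent_intervals
          ((hΦc m).intervalIntegrable 0 (B m)) ((hΦc m).intervalIntegrable (B m) y)]
      have h1 : 0 ≤ ∫ v in (0:ℝ)..(B m), Φ m v :=
        intervalIntegral.integral_nonneg (hB0 m).le (fun t _ => hΦnn m t)
      have h2 : ∫ v in (B m)..y, Φ m v = ∫ v in (B m)..y, (1:ℝ) := by
        apply intervalIntegral.integral_congr
        intro t ht
        rw [uIcc_of_le hyB] at ht
        exact hΦeq1 m t ht.1
      rw [intervalIntegral.integral_const, smul_eq_mul, mul_one] at h2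
      rw [hsplit, h2]
      linarith
  refine ⟨φ, ?_, ?_⟩
  · intro n hn
    have hmax : max n 1 = n := max_eq_left hn
    refine ⟨?_, fun y => hφnn n y, ?_, ?_, ?_, ?_⟩
    · have h21 : (2 : WithTop ℕ∞) = 1 + 1 := by norm_num
      rw [h21, contDiff_succ_iff_deriv]
      refine ⟨fun y => (hφd n y).differentiableAt, by simp, ?_⟩
      rw [hd1 n, contDiff_one_iff_deriv]
      exact ⟨fun x => (hΦd n x).differentiableAt, by rw [hd2 n]; exact hψc n⟩
    · intro y
      rw [hd1 n]
      rw [abs_le]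
      exact ⟨by linarith [hΦnn n y], hΦ1 n y⟩
    · intro y hy
      rw [hd1 n]
      exact hΦ0 n y hy
    · intro y hy
      rw [hd1 n]
      exact hΦnn n y
    · intro y hy
      rw [hd1 n, hd2 n]
      constructor
      · have := hψnn n y
        positivity
      · have := hψle n y hy
        rwa [hmax] at this
  · intro y
    rcases le_or_gt y 0 with hy | hy
    · rw [max_eq_right hy]
      have : (fun m => φ m y) = fun _ => (0:ℝ) := funext fun m => hφ0 m y hy
      rw [this]
      exact tendsto_const_nhds
    · rw [max_eq_left hy.le]
      have hBtend : Tendsto B atTop (nhds 0) := by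
        apply Filter.Tendsto.congr' _ tendsto_one_div_atTop_nhds_zero_nat
        filter_upwards [eventually_ge_atTop 1] with m hm
        rw [hB]
        simp only
        rw [max_eq_left hm]
      have hg : Tendsto (fun m => y - B m) atTop (nhds y) := by
        have := tendsto_const_nhds (x := y) (f := atTop (α := ℕ)) |>.sub hBtend
        rwa [sub_zero] at this
      exact tendsto_of_tendsto_of_tendsto_of_le_of_le hg tendsto_const_nhds
        (fun m => hφlb m y hy) (fun m => hφub m y hy.le)
end

section
/- Under the setting of Proposition prop:monot1: if the value function U(t,x) of an optimal stopping problem with gain G(t,x) = G(x₁) (depending only on the first coordinate), and the stopping region D = {(t,x) : U(t,x) = G(x₁)} is parametrised as D = {(t,x) : x₁ ≤ b₁(t, x₂, x₃)}, and if t ↦ U(t,x) is non-increasing, then t ↦ b₁(t, x₂, x₃) is non-decreasing. -/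
open Set

/-- If the gain `G` depends only on `x₁`, the value function satisfies
`U ≥ G`, the stopping region `{U = G}` is parametrised as `{x₁ ≤ b₁(t,x₂,x₃)}`, and
`t ↦ U(t,x)` is non-increasing, then `t ↦ b₁(t,x₂,x₃)` is non-decreasing. -/
theorem stmt_14 (U : ℝ → ℝ → ℝ → ℝ → ℝ) (G : ℝ → ℝ) (b₁ : ℝ → ℝ → ℝ → ℝ)
    (hUG : ∀ t x₁ x₂ x₃, G x₁ ≤ U t x₁ x₂ x₃)
    (hD : ∀ t x₁ x₂ x₃, U t x₁ x₂ x₃ = G x₁ ↔ x₁ ≤ b₁ t x₂ x₃)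
    (hUmono : ∀ x₁ x₂ x₃, Antitone fun t => U t x₁ x₂ x₃) :
    ∀ x₂ x₃, Monotone fun t => b₁ t x₂ x₃ := by
  intro x₂ x₃ t s hts
  set x₁ := b₁ t x₂ x₃
  have h1 : U t x₁ x₂ x₃ = G x₁ := (hD t x₁ x₂ x₃).2 le_rfl
  have h2 : U s x₁ x₂ x₃ = G x₁ :=
    le_antisymm (h1 ▸ hUmono x₁ x₂ x₃ hts) (hUG s x₁ x₂ x₃)
  exact (hD s x₁ x₂ x₃).1 h2
end

section
/- Let U, G : ℝ₊ × ℝ³ → ℝ with the stopping set D = {(t,x₁,x₂,x₃) : x₁ ≤ b₁(t,x₂,x₃)} characterised by U = G on D and U > G off D. If for every ε > 0 one has U(t,x₁,x₂+ε,x₃) − G(t,x₁,x₂+ε,x₃) ≥ U(t,x₁,x₂,x₃) − G(t,x₁,x₂,x₃), then x₂ ↦ b₁(t,x₂,x₃) is non-increasing. Symmetrically, if U(t,x₁,x₂,x₃+ε) − G(t,x₁,x₂,x₃+ε) ≤ U(t,x₁,x₂,x₃) − G(t,x₁,x₂,x₃) for all ε > 0, then x₃ ↦ b₁(t,x₂,x₃)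 is non-decreasing. -/
open Set

/-- With `U ≥ G` and stopping set `{U = G} = {x₁ ≤ b₁(t,x₂,x₃)}`:
if the gap `U − G` is non-decreasing in `x₂`, then `x₂ ↦ b₁(t,x₂,x₃)` is non-increasing;
symmetrically, if the gap is non-increasing in `x₃`, then `x₃ ↦ b₁(t,x₂,x₃)` is
non-decreasing. -/
theorem stmt_15 (U G : ℝ → ℝ → ℝ → ℝ → ℝ) (b₁ : ℝ → ℝ → ℝ → ℝ)
    (hUG : ∀ t x₁ x₂ x₃, G t x₁ x₂ x₃ ≤ U t x₁ x₂ x₃)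
    (hD : ∀ t x₁ x₂ x₃, U t x₁ x₂ x₃ = G t x₁ x₂ x₃ ↔ x₁ ≤ b₁ t x₂ x₃) :
    ((∀ t x₁ x₂ x₃, ∀ ε > (0:ℝ),
        U t x₁ x₂ x₃ - G t x₁ x₂ x₃
          ≤ U t x₁ (x₂ + ε) x₃ - G t x₁ (x₂ + ε) x₃) →
      ∀ t x₃, Antitone fun x₂ => b₁ t x₂ x₃) ∧
    ((∀ t x₁ x₂ x₃, ∀ ε > (0:ℝ),
        U t x₁ x₂ (x₃ + ε) - G t x₁ x₂ (x₃ + ε)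
          ≤ U t x₁ x₂ x₃ - G t x₁ x₂ x₃) →
      ∀ t x₂, Monotone fun x₃ => b₁ t x₂ x₃) := by
  constructor
  · intro h t x₃ a b hab
    rcases eq_or_lt_of_le hab with rfl | hlt
    · exact le_rfl
    set x₁ := b₁ t b x₃ with hx₁
    have hstop : U t x₁ b x₃ = G t x₁ b x₃ := (hD t x₁ b x₃).2 le_rfl
    have hε : b - a > 0 := sub_pos.2 hlt
    have := h t x₁ a x₃ (b - a) hε
    rw [add_sub_cancel] at this
    have h0 : U t x₁ a x₃ - G t x₁ a x₃ ≤ 0 := by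
      rw [hstop] at this; linarith
    have heq : U t x₁ a x₃ = G t x₁ a x₃ := le_antisymm (by linarith) (hUG t x₁ a x₃)
    exact (hD t x₁ a x₃).1 heq
  · intro h t x₂ a b hab
    rcases eq_or_lt_of_le hab with rfl | hlt
    · exact le_rfl
    set x₁ := b₁ t x₂ a with hx₁
    have hstop : U t x₁ x₂ a = G t x₁ x₂ a := (hD t x₁ x₂ a).2 le_rfl
    have hε : b - a > 0 := sub_pos.2 hlt
    have := h t x₁ x₂ a (b - a) hε
    rw [add_sub_cancel] at this
    have heq : U t x₁ x₂ b = G t x₁ x₂ b := le_antisymm (by rw [hstop] at this; linarith) (hUG t x₁ x₂ b)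
    exact (hD t x₁ x₂ b).1 heq
end
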